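/- arXiv:2511.07452 — 7 statements merged into one kernel-verified Lean document; each statement's English description precedes it below -/
import Mathlib

section
/- Let v_1,…,v_n be unit vectors in ℝ^d and w_1,…,w_n real weights summing to 1. Then Σ_j Σ_k w_j w_k ⟨v_j,v_k⟩^m ≥ b_m(ℝ^d), where b_m(ℝ^d) = ∫_S ∫_S ⟨x,y⟩^m dσ dσ, with equality if and only if the integration rule Σ_j w_j p(v_j) = ∫_S p dσ holds for every homogeneous polynomial p of degree m on ℝ^d. -/
open MeasureTheory

noncomputable def sphericalMoment (d m : ℕ) : ℝ :=
  if Odd m then 0 else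
    (∏ i ∈ Finset.range (m / 2), (2 * i + 1 : ℝ)) /
    (∏ i ∈ Finset.range (m / 2), ((d : ℝ) + 2 * i))

/-!
Expanding `⟪x, y⟫ ^ m = ∑_f (∏ᵢ x (f i)) * ∏ᵢ y (f i)` over `f : Fin m → Fin d` shows that the
energy minus `b_m` equals `∑_f (∑_j w_j ∏ᵢ v_j (f i) - ∫ ∏ᵢ x (f i) dσ)²`, a sum of squares of the
quadrature errors on the monomials `∏ᵢ X (f i)`, which span the homogeneous polynomials of
degree `m`. This uses `∫ ⟪u, x⟫ ^ m dσ = b_m` for every unit vector `u`: by reflection invariance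
`u` may be a coordinate vector, and rotation invariance in a coordinate plane together with
`∑ᵢ xᵢ² = 1` on the sphere gives the recursion `(d + j) b_{j+2} = (j + 1) b_j`.
-/

section CircleIdentity

open Polynomial

theorem coeff_one_add_C_mul_X_sq_pow {R : Type*} [CommRing R] (a : R) (k : ℕ) :
    ((1 + C a * X ^ 2) ^ k).coeff 0 = 1 ∧ ((1 + C a * X ^ 2) ^ k).coeff 1 = 0 ∧
      ((1 + C a * X ^ 2) ^ k).coeff 2 = k * a := by
  induction k with
  | zero => simp [coeff_one]
  | succ k ih =>
    obtain ⟨h0, h1, h2⟩ := ih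
    have step (n : ℕ) : ((1 + C a * X ^ 2) ^ (k + 1)).coeff n
        = ((1 + C a * X ^ 2) ^ k).coeff n + a * (X ^ 2 * (1 + C a * X ^ 2) ^ k).coeff n := by
      rw [pow_succ, mul_add, mul_one, coeff_add, ← coeff_C_mul]
      ring_nf
    simp only [step, coeff_X_pow_mul', h0, h1, h2]
    norm_num
    ring

theorem coeff_two_X_pow_mul_one_add_C_mul_X_sq_pow {R : Type*} [CommRing R] (a : R) (l k : ℕ) :
    (X ^ l * (1 + C a * X ^ 2) ^ k).coeff 2 =
      (if l = 0 then k * a else 0) + if l = 2 then 1 else 0 := by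
  obtain ⟨h0, h1, h2⟩ := coeff_one_add_C_mul_X_sq_pow a k
  rw [coeff_X_pow_mul']
  rcases l with _ | _ | _ | l <;> simp [*]

/-- The rational parametrisation `c = (1 - t²)/(1 + t²)`, `s = 2t/(1 + t²)` of the circle turns
the hypothesis into a polynomial identity in `t`; compare the coefficients of `t²`. -/
theorem succ_mul_eq_of_forall_sq_add_sq_eq_one {j : ℕ} (b : ℕ → ℝ)
    (h : ∀ c s : ℝ, c ^ 2 + s ^ 2 = 1 →
      ∑ l ∈ Finset.range (j + 3), (j + 2).choose l * b l * s ^ l * c ^ (j + 2 - l) = b 0) :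
    (j + 1) * b 2 = b 0 := by
  have hpoly : ∑ l ∈ Finset.range (j + 3),
      C ((j + 2).choose l * b l * 2 ^ l) * (X ^ l * (1 + C (-1) * X ^ 2) ^ (j + 2 - l))
      = C (b 0) * (1 + C 1 * X ^ 2) ^ (j + 2) := by
    refine Polynomial.funext fun t => ?_
    have hu : 1 + t ^ 2 ≠ 0 := by positivity
    have hcircle := h ((1 - t ^ 2) / (1 + t ^ 2)) (2 * t / (1 + t ^ 2)) (by field_simp; ring)
    simp only [eval_finsetSum, eval_mul, eval_C, eval_pow, eval_X, eval_add, eval_one, one_mul,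
      neg_one_mul, ← sub_eq_add_neg]
    rw [← hcircle, Finset.sum_mul]
    refine Finset.sum_congr rfl fun l hl => ?_
    rw [div_pow, div_pow, ← pow_mul_pow_sub _ (by grind : l ≤ j + 2)]
    field_simp
    ring
  have hcoeff := congrArg (coeff · 2) hpoly
  simp only [finsetSum_coeff, coeff_C_mul, coeff_two_X_pow_mul_one_add_C_mul_X_sq_pow,
    (coeff_one_add_C_mul_X_sq_pow (1 : ℝ) (j + 2)).2.2, mul_add, mul_ite, mul_zero,
    Finset.sum_add_distrib, Finset.sum_ite_eq', Finset.mem_range] at hcoeff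
  rw [if_pos (by omega), if_pos (by omega), Nat.choose_zero_right, Nat.cast_choose_two] at hcoeff
  have key : (2 * (j + 2 : ℝ)) * ((j + 1) * b 2) = (2 * (j + 2)) * b 0 := by
    push_cast at hcoeff
    linear_combination hcoeff
  exact mul_left_cancel₀ (by positivity) key

end CircleIdentity

theorem integrable_of_continuous_of_ae_norm_eq_one {E : Type*} [NormedAddCommGroup E]
    [ProperSpace E] [MeasurableSpace E] [OpensMeasurableSpace E] {σ : Measure E}
    [IsFiniteMeasure σ] (hsupp : ∀ᵐ x ∂σ, ‖x‖ = 1) {g : E → ℝ} (hg : Continuous g) :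
    Integrable g σ := by
  have hsphere := hg.continuousOn.integrableOn_compact (μ := σ) (isCompact_sphere (0 : E) 1)
  rwa [IntegrableOn, Measure.restrict_eq_self_of_ae_mem (by simpa using hsupp)] at hsphere

section Invariance

variable {E : Type*} [NormedAddCommGroup E] [InnerProductSpace ℝ E] [MeasurableSpace E]
  [BorelSpace E] {σ : Measure E}

theorem integral_comp_linearIsometryEquiv (O : E ≃ₗᵢ[ℝ] E) (hO : σ.map O = σ) (g : E → ℝ) :
    ∫ x, g (O x) ∂σ = ∫ x, g x ∂σ := by
  conv_rhs => rw [← hO]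
  exact (O.toHomeomorph.isClosedEmbedding.measurableEmbedding.integral_map g).symm

theorem integral_comp_inner_eq_of_norm_eq (hinv : ∀ O : E ≃ₗᵢ[ℝ] E, σ.map O = σ)
    {u u' : E} (h : ‖u‖ = ‖u'‖) (g : ℝ → ℝ) :
    ∫ x, g (inner ℝ u x) ∂σ = ∫ x, g (inner ℝ u' x) ∂σ := by
  set R := (ℝ ∙ (u - u'))ᗮ.reflection
  have hR (x : E) : inner ℝ u (R x) = inner ℝ u' x := by
    rw [← R.inner_map_map, Submodule.reflection_reflection, Submodule.reflection_sub h]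
  simp_rw [← hR]
  exact (integral_comp_linearIsometryEquiv R (hinv R) fun x => g (inner ℝ u x)).symm

end Invariance

theorem sphericalMoment_zero (d : ℕ) : sphericalMoment d 0 = 1 := by
  simp [sphericalMoment]

theorem sphericalMoment_one (d : ℕ) : sphericalMoment d 1 = 0 := by
  simp [sphericalMoment]

theorem sphericalMoment_add_two {d : ℕ} (hd : 0 < d) (j : ℕ) :
    (d + j : ℝ) * sphericalMoment d (j + 2) = (j + 1) * sphericalMoment d j := by
  rcases Nat.even_or_odd j with ⟨r, rfl⟩ | hodd
  · have hodd : ¬Odd (r + r) := Nat.not_odd_iff_even.mpr ⟨r, rfl⟩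
    have hodd' : ¬Odd (r + r + 2) := Nat.not_odd_iff_even.mpr ⟨r + 1, by ring⟩
    have hhalf : (r + r + 2) / 2 = r + 1 := by omega
    have hhalf' : (r + r) / 2 = r := by omega
    have hpos : ∏ i ∈ Finset.range r, ((d : ℝ) + 2 * i) ≠ 0 :=
      Finset.prod_ne_zero_iff.mpr fun i _ => by positivity
    have hd' : (d : ℝ) + 2 * r ≠ 0 := by positivity
    simp only [sphericalMoment, if_neg hodd, if_neg hodd', hhalf, hhalf', Finset.prod_range_succ]
    push_cast
    field_simp
    ring
  · have hodd' : Odd (j + 2) := hodd.add_even even_two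
    simp [sphericalMoment, hodd, hodd']

section Coordinates

variable {d : ℕ} {σ : Measure (EuclideanSpace ℝ (Fin d))}

theorem succ_mul_integral_pow_mul_sq [IsProbabilityMeasure σ] (hsupp : ∀ᵐ x ∂σ, ‖x‖ = 1)
    (hinv : ∀ O : EuclideanSpace ℝ (Fin d) ≃ₗᵢ[ℝ] EuclideanSpace ℝ (Fin d), σ.map O = σ)
    {i₀ i₁ : Fin d} (hne : i₀ ≠ i₁) (j : ℕ) :
    (j + 1) * ∫ x, x i₀ ^ j * x i₁ ^ 2 ∂σ = ∫ x, x i₀ ^ (j + 2) ∂σ := by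
  have hrec := succ_mul_eq_of_forall_sq_add_sq_eq_one (j := j)
    (fun l => ∫ x, x i₀ ^ (j + 2 - l) * x i₁ ^ l ∂σ) fun c s hcs => ?_
  · simpa using hrec
  have hu : ‖c • EuclideanSpace.single i₀ (1 : ℝ) + s • EuclideanSpace.single i₁ 1‖
      = ‖EuclideanSpace.single i₀ (1 : ℝ)‖ := by
    rw [← sq_eq_sq₀ (norm_nonneg _) (norm_nonneg _), EuclideanSpace.real_norm_sq_eq,
      EuclideanSpace.real_norm_sq_eq]
    simpa [Finset.sum_add_distrib, add_sq, hne.symm] using hcs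
  have hrot := integral_comp_inner_eq_of_norm_eq hinv hu (· ^ (j + 2))
  simp only [inner_add_left, real_inner_smul_left, EuclideanSpace.inner_single_left,
    conj_trivial, one_mul] at hrot
  calc ∑ l ∈ Finset.range (j + 3),
        (j + 2).choose l * (∫ x, x i₀ ^ (j + 2 - l) * x i₁ ^ l ∂σ) * s ^ l * c ^ (j + 2 - l)
      = ∫ x, ∑ l ∈ Finset.range (j + 3),
          (s * x i₁) ^ l * (c * x i₀) ^ (j + 2 - l) * (j + 2).choose l ∂σ := by
        rw [integral_finsetSum _ fun l _ =>
          integrable_of_continuous_of_ae_norm_eq_one hsupp (by fun_prop)]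
        refine Finset.sum_congr rfl fun l _ => ?_
        rw [← integral_const_mul, ← integral_mul_const, ← integral_mul_const]
        congr 1 with x
        ring
    _ = ∫ x, x i₀ ^ (j + 2 - 0) * x i₁ ^ 0 ∂σ := by
        simp only [← add_pow, add_comm (s * _), hrot, pow_zero, mul_one, Nat.sub_zero]

theorem integral_pow_add_two [IsProbabilityMeasure σ] (hsupp : ∀ᵐ x ∂σ, ‖x‖ = 1)
    (hinv : ∀ O : EuclideanSpace ℝ (Fin d) ≃ₗᵢ[ℝ] EuclideanSpace ℝ (Fin d), σ.map O = σ)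
    (i₀ : Fin d) (j : ℕ) :
    (d + j : ℝ) * ∫ x, x i₀ ^ (j + 2) ∂σ = (j + 1) * ∫ x, x i₀ ^ j ∂σ := by
  have hsplit : ∫ x, x i₀ ^ j ∂σ = ∑ i, ∫ x, x i₀ ^ j * x i ^ 2 ∂σ := by
    rw [← integral_finsetSum _ fun i _ =>
      integrable_of_continuous_of_ae_norm_eq_one hsupp (by fun_prop)]
    refine integral_congr_ae (hsupp.mono fun x hx => ?_)
    dsimp only
    rw [← Finset.mul_sum, ← EuclideanSpace.real_norm_sq_eq, hx, one_pow, mul_one]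
  have hoff : ∀ i ∈ Finset.univ.erase i₀,
      (j + 1) * ∫ x, x i₀ ^ j * x i ^ 2 ∂σ = ∫ x, x i₀ ^ (j + 2) ∂σ :=
    fun i hi => succ_mul_integral_pow_mul_sq hsupp hinv (Finset.ne_of_mem_erase hi).symm j
  rw [hsplit, Finset.mul_sum, ← Finset.add_sum_erase _ _ (Finset.mem_univ i₀),
    Finset.sum_congr rfl hoff, Finset.sum_const, Finset.card_erase_of_mem (Finset.mem_univ _),
    Finset.card_univ, Fintype.card_fin, nsmul_eq_mul]
  simp_rw [← pow_add]
  push_cast [Nat.cast_sub i₀.pos]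
  ring

theorem integral_coord_pow [IsProbabilityMeasure σ] (hsupp : ∀ᵐ x ∂σ, ‖x‖ = 1)
    (hinv : ∀ O : EuclideanSpace ℝ (Fin d) ≃ₗᵢ[ℝ] EuclideanSpace ℝ (Fin d), σ.map O = σ)
    (i₀ : Fin d) (k : ℕ) : ∫ x, x i₀ ^ k ∂σ = sphericalMoment d k := by
  induction k using Nat.twoStepInduction with
  | zero => simp [sphericalMoment_zero]
  | one =>
    have hsymm := integral_comp_inner_eq_of_norm_eq hinv
      (norm_neg (EuclideanSpace.single i₀ (1 : ℝ))).symm id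
    simp only [id, inner_neg_left, EuclideanSpace.inner_single_left, conj_trivial, one_mul,
      integral_neg] at hsymm
    simp only [sphericalMoment_one, pow_one]
    linarith
  | more j ih _ =>
    have hpos : (0 : ℝ) < d + j := by have := i₀.pos; positivity
    refine mul_left_cancel₀ hpos.ne' ?_
    rw [integral_pow_add_two hsupp hinv, sphericalMoment_add_two i₀.pos, ih]

theorem integral_inner_pow [IsProbabilityMeasure σ] (hsupp : ∀ᵐ x ∂σ, ‖x‖ = 1)
    (hinv : ∀ O : EuclideanSpace ℝ (Fin d) ≃ₗᵢ[ℝ] EuclideanSpace ℝ (Fin d), σ.map O = σ)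
    {u : EuclideanSpace ℝ (Fin d)} (hu : ‖u‖ = 1) (k : ℕ) :
    ∫ x, inner ℝ u x ^ k ∂σ = sphericalMoment d k := by
  obtain ⟨i₀⟩ : Nonempty (Fin d) := by
    by_contra h
    rw [not_nonempty_iff] at h
    simp [Subsingleton.elim u 0] at hu
  have hnorm : ‖u‖ = ‖EuclideanSpace.single i₀ (1 : ℝ)‖ := by simp [hu]
  rw [integral_comp_inner_eq_of_norm_eq hinv hnorm (· ^ k)]
  simp only [EuclideanSpace.inner_single_left, conj_trivial, one_mul]
  exact integral_coord_pow hsupp hinv i₀ k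

end Coordinates

theorem inner_pow_eq_sum_prod {d : ℕ} (a b : EuclideanSpace ℝ (Fin d)) (m : ℕ) :
    inner ℝ a b ^ m = ∑ f : Fin m → Fin d, (∏ i, a (f i)) * ∏ i, b (f i) := by
  simp only [PiLp.inner_apply, RCLike.inner_apply, conj_trivial, Fintype.sum_pow,
    Finset.prod_mul_distrib, mul_comm]

theorem MvPolynomial.homogeneousSubmodule_eq_span_prod_X {σ R : Type*} [CommSemiring R]
    (m : ℕ) : homogeneousSubmodule σ R m =
      Submodule.span R (Set.range fun f : Fin m → σ => ∏ i, X (f i)) := by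
  rw [← homogeneousSubmodule_one_pow, homogeneousSubmodule_one_eq_span_X, Submodule.span_pow]
  congr 1
  ext p
  simp only [Set.mem_pow_iff_prod, Set.mem_range, Classical.skolem]
  constructor
  · rintro ⟨_, ⟨g, hg⟩, rfl⟩
    exact ⟨g, by simp only [hg]⟩
  · rintro ⟨g, rfl⟩
    exact ⟨_, ⟨g, fun _ => rfl⟩, rfl⟩

section Quadrature

variable {d n : ℕ} {σ : Measure (EuclideanSpace ℝ (Fin d))}

noncomputable def quadratureError (σ : Measure (EuclideanSpace ℝ (Fin d))) (w : Fin n → ℝ)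
    (v : Fin n → EuclideanSpace ℝ (Fin d)) (p : MvPolynomial (Fin d) ℝ) : ℝ :=
  ∑ j, w j * MvPolynomial.eval (fun i => v j i) p - ∫ x, MvPolynomial.eval (fun i => x i) p ∂σ

theorem forall_isHomogeneous_quadratureError_eq_zero_iff [IsFiniteMeasure σ]
    (hsupp : ∀ᵐ x ∂σ, ‖x‖ = 1) (w : Fin n → ℝ) (v : Fin n → EuclideanSpace ℝ (Fin d)) (m : ℕ) :
    (∀ p : MvPolynomial (Fin d) ℝ, p.IsHomogeneous m → quadratureError σ w v p = 0) ↔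
      ∀ f : Fin m → Fin d, quadratureError σ w v (∏ i, MvPolynomial.X (f i)) = 0 := by
  have hint (p : MvPolynomial (Fin d) ℝ) :
      Integrable (fun x : EuclideanSpace ℝ (Fin d) => MvPolynomial.eval (fun i => x i) p) σ :=
    integrable_of_continuous_of_ae_norm_eq_one hsupp
      ((MvPolynomial.continuous_eval p).comp (PiLp.continuous_ofLp 2 _))
  let L : MvPolynomial (Fin d) ℝ →ₗ[ℝ] ℝ :=
    { toFun := quadratureError σ w v
      map_add' := fun p q => by
        simp only [quadratureError, map_add, mul_add, Finset.sum_add_distrib,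
          integral_add (hint p) (hint q)]
        ring
      map_smul' := fun a p => by
        simp only [quadratureError, MvPolynomial.smul_eval, smul_eq_mul, integral_const_mul,
          RingHom.id_apply, mul_sub, Finset.mul_sum]
        congr 1
        exact Finset.sum_congr rfl fun j _ => by ring }
  change (∀ p, p ∈ MvPolynomial.homogeneousSubmodule _ _ m → p ∈ LinearMap.ker L) ↔ _
  rw [← SetLike.le_def, MvPolynomial.homogeneousSubmodule_eq_span_prod_X, Submodule.span_le,
    Set.range_subset_iff]
  rfl

end Quadrature

theorem sum_sq_sum_mul_prod {d n : ℕ} (m : ℕ) (w : Fin n → ℝ)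
    (v : Fin n → EuclideanSpace ℝ (Fin d)) :
    ∑ f : Fin m → Fin d, (∑ j, w j * ∏ i, v j (f i)) ^ 2 =
      ∑ j, ∑ k, w j * w k * inner ℝ (v j) (v k) ^ m := by
  simp_rw [sq, Finset.sum_mul_sum, inner_pow_eq_sum_prod, Finset.mul_sum]
  rw [Finset.sum_comm]
  refine Finset.sum_congr rfl fun j _ => ?_
  rw [Finset.sum_comm]
  exact Finset.sum_congr rfl fun k _ => Finset.sum_congr rfl fun f _ => by ring

section Energy

variable {d n : ℕ} {σ : Measure (EuclideanSpace ℝ (Fin d))}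

theorem sum_prod_mul_integral_prod [IsProbabilityMeasure σ] (hsupp : ∀ᵐ x ∂σ, ‖x‖ = 1)
    (hinv : ∀ O : EuclideanSpace ℝ (Fin d) ≃ₗᵢ[ℝ] EuclideanSpace ℝ (Fin d), σ.map O = σ)
    (m : ℕ) {a : EuclideanSpace ℝ (Fin d)} (ha : ‖a‖ = 1) :
    ∑ f : Fin m → Fin d, (∏ i, a (f i)) * ∫ x, ∏ i, x (f i) ∂σ = sphericalMoment d m := by
  simp_rw [← integral_const_mul]
  rw [← integral_finsetSum _ fun f _ =>
    integrable_of_continuous_of_ae_norm_eq_one hsupp (by fun_prop)]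
  simp_rw [← inner_pow_eq_sum_prod]
  exact integral_inner_pow hsupp hinv ha m

theorem sum_quadratureError_prod_X_sq [IsProbabilityMeasure σ] (hsupp : ∀ᵐ x ∂σ, ‖x‖ = 1)
    (hinv : ∀ O : EuclideanSpace ℝ (Fin d) ≃ₗᵢ[ℝ] EuclideanSpace ℝ (Fin d), σ.map O = σ)
    (m : ℕ) {v : Fin n → EuclideanSpace ℝ (Fin d)} (hv : ∀ j, ‖v j‖ = 1) {w : Fin n → ℝ}
    (hw : ∑ j, w j = 1) :
    ∑ f : Fin m → Fin d, quadratureError σ w v (∏ i, MvPolynomial.X (f i)) ^ 2 =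
      ∑ j, ∑ k, w j * w k * inner ℝ (v j) (v k) ^ m - sphericalMoment d m := by
  set A : (Fin m → Fin d) → ℝ := fun f => ∑ j, w j * ∏ i, v j (f i)
  set B : (Fin m → Fin d) → ℝ := fun f => ∫ x, ∏ i, x (f i) ∂σ
  have hB (a : EuclideanSpace ℝ (Fin d)) (ha : ‖a‖ = 1) :
      ∑ f, (∏ i, a (f i)) * B f = sphericalMoment d m :=
    sum_prod_mul_integral_prod hsupp hinv m ha
  have hAB : ∑ f, A f * B f = sphericalMoment d m := by
    simp_rw [A, Finset.sum_mul, mul_assoc]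
    rw [Finset.sum_comm]
    simp_rw [← Finset.mul_sum, hB _ (hv _), ← Finset.sum_mul, hw, one_mul]
  have hBB : ∑ f, B f ^ 2 = sphericalMoment d m := by
    calc ∑ f, B f ^ 2 = ∫ x, ∑ f, (∏ i, x (f i)) * B f ∂σ := by
          rw [integral_finsetSum _ fun f _ =>
            (integrable_of_continuous_of_ae_norm_eq_one hsupp (by fun_prop)).mul_const _]
          simp_rw [integral_mul_const, B, sq]
      _ = sphericalMoment d m := by
          rw [integral_congr_ae (hsupp.mono fun x hx => hB x hx)]
          simp
  have hQ (f : Fin m → Fin d) :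
      quadratureError σ w v (∏ i, MvPolynomial.X (f i)) = A f - B f := by
    simp [quadratureError, A, B]
  have hexpand : ∑ f : Fin m → Fin d, quadratureError σ w v (∏ i, MvPolynomial.X (f i)) ^ 2
      = ∑ f, A f ^ 2 - 2 * ∑ f, A f * B f + ∑ f, B f ^ 2 := by
    simp only [hQ, sub_sq, Finset.sum_add_distrib, Finset.sum_sub_distrib, Finset.mul_sum,
      mul_assoc]
  rw [hexpand, sum_sq_sum_mul_prod, hAB, hBB]
  ring

end Energy

theorem weighted_half_design_characterisation_general (d : ℕ)
    (σ : Measure (EuclideanSpace ℝ (Fin d))) [IsProbabilityMeasure σ]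
    (hsupp : ∀ᵐ x ∂σ, ‖x‖ = 1)
    (hinv : ∀ O : (EuclideanSpace ℝ (Fin d)) ≃ₗᵢ[ℝ] (EuclideanSpace ℝ (Fin d)),
      Measure.map (⇑O) σ = σ)
    (m : ℕ)
    (n : ℕ) (v : Fin n → EuclideanSpace ℝ (Fin d)) (hv : ∀ j, ‖v j‖ = 1)
    (w : Fin n → ℝ) (hw : ∑ j, w j = 1) :
    sphericalMoment d m ≤ ∑ j, ∑ k, w j * w k * (inner ℝ (v j) (v k) : ℝ) ^ m ∧
    ((∑ j, ∑ k, w j * w k * (inner ℝ (v j) (v k) : ℝ) ^ m = sphericalMoment d m) ↔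
      ∀ p : MvPolynomial (Fin d) ℝ, p.IsHomogeneous m →
        ∑ j, w j * MvPolynomial.eval (fun i => v j i) p =
          ∫ x, MvPolynomial.eval (fun i => x i) p ∂σ) := by
  have hsq := sum_quadratureError_prod_X_sq hsupp hinv m hv hw
  have hnonneg : 0 ≤ ∑ f : Fin m → Fin d, quadratureError σ w v (∏ i, MvPolynomial.X (f i)) ^ 2 :=
    Finset.sum_nonneg fun f _ => sq_nonneg _
  refine ⟨by linarith, ?_⟩
  rw [← sub_eq_zero, ← hsq, Finset.sum_eq_zero_iff_of_nonneg fun f _ => sq_nonneg _]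
  simp only [Finset.mem_univ, forall_const, sq_eq_zero_iff]
  rw [← forall_isHomogeneous_quadratureError_eq_zero_iff hsupp w v m, iff_comm]
  simp only [quadratureError, sub_eq_zero]

/-- For unit vectors `v_j` in `ℝ^d` and real weights summing to 1,
`Σ_j Σ_k w_j w_k ⟨v_j,v_k⟩^m ≥ b_m(ℝ^d)`, with equality iff the weighted point set
integrates every homogeneous polynomial of degree `m` exactly against the
rotation-invariant probability measure `σ` on the sphere. -/
theorem weighted_half_design_characterisation (d : ℕ) (hd : 2 ≤ d)
    (σ : Measure (EuclideanSpace ℝ (Fin d))) [IsProbabilityMeasure σ]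
    (hsupp : ∀ᵐ x ∂σ, ‖x‖ = 1)
    (hinv : ∀ O : (EuclideanSpace ℝ (Fin d)) ≃ₗᵢ[ℝ] (EuclideanSpace ℝ (Fin d)),
      Measure.map (⇑O) σ = σ)
    (m : ℕ) (hm : 1 ≤ m)
    (n : ℕ) (v : Fin n → EuclideanSpace ℝ (Fin d)) (hv : ∀ j, ‖v j‖ = 1)
    (w : Fin n → ℝ) (hw : ∑ j, w j = 1) :
    sphericalMoment d m ≤ ∑ j, ∑ k, w j * w k * (inner ℝ (v j) (v k) : ℝ) ^ m ∧
    ((∑ j, ∑ k, w j * w k * (inner ℝ (v j) (v k) : ℝ) ^ m = sphericalMoment d m) ↔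
      ∀ p : MvPolynomial (Fin d) ℝ, p.IsHomogeneous m →
        ∑ j, w j * MvPolynomial.eval (fun i => v j i) p =
          ∫ x, MvPolynomial.eval (fun i => x i) p ∂σ) :=
  weighted_half_design_characterisation_general d σ hsupp hinv m n v hv w hw
end

section
/- Let v_1,…,v_n be nonzero vectors in ℝ^d and m an odd positive integer. If Σ_j Σ_k ⟨v_j,v_k⟩^m = 0, then for every odd ℓ with 1 ≤ ℓ ≤ m, Σ_j Σ_k ‖v_j‖^{m−ℓ} ‖v_k‖^{m−ℓ} ⟨v_j,v_k⟩^ℓ = 0. -/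
/-! The weighted Gram power `∑ⱼ ∑ₖ wⱼ wₖ ⟪vⱼ, vₖ⟫^m` is the squared Euclidean norm of the moment
tensor `∑ⱼ wⱼ vⱼ^⊗m`, so it vanishes exactly when that tensor does. Writing `m = l + 2r` (both are
odd) and contracting `r` pairs of indices of the order-`m` moment tensor against each other gives
the order-`l` moment tensor with weights `‖vⱼ‖^(2r)`, which therefore vanishes as well. -/

open scoped InnerProductSpace

section MomentTensor

variable {α κ : Type*} [Fintype α] [Fintype κ]

theorem real_inner_pow_card_eq_sum_prod (x y : EuclideanSpace ℝ κ) (ι : Type*) [Fintype ι]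
    [DecidableEq ι] : ⟪x, y⟫_ℝ ^ Fintype.card ι = ∑ i : ι → κ, ∏ a, x (i a) * y (i a) := by
  have hinner : ⟪x, y⟫_ℝ = ∑ c, x c * y c := by simp [PiLp.inner_apply, mul_comm]
  rw [hinner, ← Finset.card_univ, ← Finset.prod_const, Fintype.prod_sum]

def momentTensor (w : α → ℝ) (v : α → EuclideanSpace ℝ κ) (ι : Type*) [Fintype ι] (i : ι → κ) :
    ℝ :=
  ∑ j, w j * ∏ a, v j (i a)

theorem sum_sq_momentTensor (w : α → ℝ) (v : α → EuclideanSpace ℝ κ) (ι : Type*) [Fintype ι]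
    [DecidableEq ι] :
    ∑ i : ι → κ, momentTensor w v ι i ^ 2
      = ∑ j, ∑ k, w j * w k * ⟪v j, v k⟫_ℝ ^ Fintype.card ι := by
  simp_rw [momentTensor, sq, Finset.sum_mul_sum, real_inner_pow_card_eq_sum_prod,
    Finset.mul_sum, Finset.prod_mul_distrib]
  rw [Finset.sum_comm]
  refine Finset.sum_congr rfl fun j _ => ?_
  rw [Finset.sum_comm]
  refine Finset.sum_congr rfl fun k _ => Finset.sum_congr rfl fun i _ => ?_
  ring

theorem sum_sum_mul_inner_pow_eq_zero_iff (w : α → ℝ) (v : α → EuclideanSpace ℝ κ)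
    (ι : Type*) [Fintype ι] [DecidableEq ι] :
    ∑ j, ∑ k, w j * w k * ⟪v j, v k⟫_ℝ ^ Fintype.card ι = 0 ↔ momentTensor w v ι = 0 := by
  rw [← sum_sq_momentTensor, Finset.sum_eq_zero_iff_of_nonneg fun i _ => sq_nonneg _, funext_iff]
  simp

theorem momentTensor_mul_norm_pow (w : α → ℝ) (v : α → EuclideanSpace ℝ κ)
    (ι ρ : Type*) [Fintype ι] [Fintype ρ] [DecidableEq ρ] (i : ι → κ) :
    momentTensor (fun j => w j * ‖v j‖ ^ (2 * Fintype.card ρ)) v ι i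
      = ∑ p : ρ → κ, momentTensor w v (ι ⊕ (ρ ⊕ ρ)) (Sum.elim i (Sum.elim p p)) := by
  have hnorm (x : EuclideanSpace ℝ κ) :
      ‖x‖ ^ (2 * Fintype.card ρ) = ∑ p : ρ → κ, ∏ b, x (p b) * x (p b) := by
    rw [pow_mul, ← real_inner_self_eq_norm_sq, real_inner_pow_card_eq_sum_prod]
  simp only [momentTensor, Fintype.prod_sum_type, Sum.elim_inl, Sum.elim_inr, hnorm]
  rw [Finset.sum_comm]
  refine Finset.sum_congr rfl fun j _ => ?_
  rw [Finset.mul_sum, Finset.sum_mul]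
  refine Finset.sum_congr rfl fun p _ => ?_
  rw [Finset.prod_mul_distrib]
  ring

end MomentTensor

theorem odd_half_design_descends_general (d n m : ℕ) (hm : Odd m)
    (v : Fin n → EuclideanSpace ℝ (Fin d))
    (h : ∑ j, ∑ k, (inner ℝ (v j) (v k) : ℝ) ^ m = 0) :
    ∀ l : ℕ, Odd l → 1 ≤ l → l ≤ m →
      ∑ j, ∑ k, ‖v j‖ ^ (m - l) * ‖v k‖ ^ (m - l) *
        (inner ℝ (v j) (v k) : ℝ) ^ l = 0 := by
  intro l hl _ hlm
  obtain ⟨r, hr⟩ : ∃ r, m - l = 2 * r := (Nat.Odd.sub_odd hm hl).two_dvd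
  have hT : momentTensor (fun _ => 1) v (Fin l ⊕ (Fin r ⊕ Fin r)) = 0 := by
    rw [← sum_sum_mul_inner_pow_eq_zero_iff]
    simpa [show l + (r + r) = m by omega] using h
  have hT' : momentTensor (fun j => ‖v j‖ ^ (2 * r)) v (Fin l) = 0 := by
    funext i
    simpa [hT] using momentTensor_mul_norm_pow (fun _ => 1) v (Fin l) (Fin r) i
  simpa [hr] using (sum_sum_mul_inner_pow_eq_zero_iff _ v (Fin l)).2 hT'

/-- If nonzero vectors `v_j` in `ℝ^d` satisfy `Σ Σ ⟨v_j,v_k⟩^m = 0` for an odd `m`,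
then for every odd `ℓ ≤ m`,
`Σ Σ ‖v_j‖^{m−ℓ} ‖v_k‖^{m−ℓ} ⟨v_j,v_k⟩^ℓ = 0`. -/
theorem odd_half_design_descends (d n m : ℕ) (hm : Odd m) (hm1 : 1 ≤ m)
    (v : Fin n → EuclideanSpace ℝ (Fin d)) (hv : ∀ j, v j ≠ 0)
    (h : ∑ j, ∑ k, (inner ℝ (v j) (v k) : ℝ) ^ m = 0) :
    ∀ l : ℕ, Odd l → 1 ≤ l → l ≤ m →
      ∑ j, ∑ k, ‖v j‖ ^ (m - l) * ‖v k‖ ^ (m - l) *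
        (inner ℝ (v j) (v k) : ℝ) ^ l = 0 :=
  odd_half_design_descends_general d n m hm v h
end

section
/- For any vectors v_1,…,v_n in ℂ^d, not all zero, Σ_j Σ_k |⟨v_j,v_k⟩|² ≥ (1/d)(Σ_ℓ ‖v_ℓ‖²)², with equality if and only if (v_j) is a tight frame for ℂ^d (i.e., Σ_j v_j v_j* = c·I for some c > 0). -/
/-!
Write an operator `T` on `E` as its matrix `⟪b a, T (b a')⟫` in an orthonormal basis `b`, viewed
as a vector of `ℓ²(ι × ι)`, so that its norm is the Hilbert–Schmidt norm of `T`. For the frame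
operator `S = ∑ⱼ vⱼ vⱼ*` Parseval's identity gives `‖S‖²_HS = ∑ⱼ ∑ₖ |⟪vⱼ, vₖ⟫|²` and
`⟪1, S⟫_HS = tr S = ∑ₗ ‖vₗ‖²`, while `‖1‖²_HS = d`. The inequality is Cauchy–Schwarz for
`⟪1, S⟫_HS`; equality holds exactly when `S` is a multiple of `1`, and comparing traces shows the
multiple is `(∑ₗ ‖vₗ‖²) / d > 0`.
-/

open Finset Module InnerProductSpace
open scoped InnerProductSpace

variable {𝕜 E ι κ : Type*} [RCLike 𝕜] [NormedAddCommGroup E] [InnerProductSpace 𝕜 E]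
  [Fintype ι] [Fintype κ]

variable (𝕜) in
noncomputable def frameOperator (v : κ → E) : E →L[𝕜] E := ∑ j, rankOne 𝕜 (v j) (v j)

variable (𝕜) in
noncomputable def framePotential (v : κ → E) : ℝ := ∑ j, ∑ k, ‖⟪v j, v k⟫_𝕜‖ ^ 2

lemma frameOperator_apply (v : κ → E) (x : E) :
    frameOperator 𝕜 v x = ∑ j, ⟪v j, x⟫_𝕜 • v j := by
  simp [frameOperator]

lemma frameOperator_eq_smul_one_iff (v : κ → E) (r : 𝕜) :
    frameOperator 𝕜 v = r • 1 ↔ ∀ x, ∑ j, ⟪v j, x⟫_𝕜 • v j = r • x := by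
  simp [ContinuousLinearMap.ext_iff, frameOperator_apply]

lemma inner_frameOperator (v : κ → E) (x y : E) :
    ⟪x, frameOperator 𝕜 v y⟫_𝕜 = ∑ j, ⟪x, v j⟫_𝕜 * ⟪v j, y⟫_𝕜 := by
  simp [frameOperator_apply, inner_sum, inner_smul_right, mul_comm]

noncomputable def matrixEntries (b : OrthonormalBasis ι 𝕜 E) :
    (E →L[𝕜] E) →ₗ[𝕜] EuclideanSpace 𝕜 (ι × ι) where
  toFun T := WithLp.toLp 2 fun p => ⟪b p.1, T (b p.2)⟫_𝕜
  map_add' T U := by ext; simp [inner_add_right]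
  map_smul' r T := by ext; simp [inner_smul_right]

@[simp]
lemma matrixEntries_apply (b : OrthonormalBasis ι 𝕜 E) (T : E →L[𝕜] E) (p : ι × ι) :
    matrixEntries b T p = ⟪b p.1, T (b p.2)⟫_𝕜 := rfl

lemma matrixEntries_injective (b : OrthonormalBasis ι 𝕜 E) :
    Function.Injective (matrixEntries b) := by
  intro T U h
  refine ContinuousLinearMap.coe_injective (b.toBasis.ext fun a' => ?_)
  refine ext_inner_left_basis b.toBasis fun a => ?_
  simpa using congr($h (a, a'))

lemma norm_matrixEntries_one_sq (b : OrthonormalBasis ι 𝕜 E) :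
    ‖matrixEntries b 1‖ ^ 2 = Fintype.card ι := by
  classical
  rw [EuclideanSpace.norm_sq_eq, Fintype.sum_prod_type]
  simp [orthonormal_iff_ite.mp b.orthonormal, apply_ite]

lemma inner_matrixEntries_one (b : OrthonormalBasis ι 𝕜 E) (T : E →L[𝕜] E) :
    ⟪matrixEntries b 1, matrixEntries b T⟫_𝕜 = ∑ a, ⟪b a, T (b a)⟫_𝕜 := by
  classical
  simp [PiLp.inner_apply, Fintype.sum_prod_type, orthonormal_iff_ite.mp b.orthonormal]

lemma sum_inner_frameOperator_self (b : OrthonormalBasis ι 𝕜 E) (v : κ → E) :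
    ∑ a, ⟪b a, frameOperator 𝕜 v (b a)⟫_𝕜 = ∑ l, (‖v l‖ : 𝕜) ^ 2 := by
  simp_rw [inner_frameOperator]
  rw [sum_comm]
  refine sum_congr rfl fun l _ => ?_
  simp_rw [mul_comm ⟪b _, v l⟫_𝕜, b.sum_inner_mul_inner, inner_self_eq_norm_sq_to_K]

lemma norm_matrixEntries_frameOperator_sq (b : OrthonormalBasis ι 𝕜 E) (v : κ → E) :
    ‖matrixEntries b (frameOperator 𝕜 v)‖ ^ 2 = framePotential 𝕜 v := by
  have entry (j k : κ) : (‖⟪v j, v k⟫_𝕜‖ ^ 2 : 𝕜) =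
      ∑ p : ι × ι, (⟪v j, b p.1⟫_𝕜 * ⟪b p.1, v k⟫_𝕜) * (⟪v k, b p.2⟫_𝕜 * ⟪b p.2, v j⟫_𝕜) := by
    rw [← RCLike.conj_mul, inner_conj_symm, mul_comm, ← b.sum_inner_mul_inner (v j),
      ← b.sum_inner_mul_inner (v k), sum_mul_sum, Fintype.sum_prod_type]
  apply RCLike.ofReal_injective (K := 𝕜)
  rw [EuclideanSpace.norm_sq_eq, framePotential]
  push_cast
  simp_rw [entry, ← RCLike.conj_mul, matrixEntries_apply, inner_frameOperator, map_sum, map_mul,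
    inner_conj_symm, sum_mul_sum]
  rw [sum_comm]
  refine sum_congr rfl fun j _ => ?_
  rw [sum_comm]
  refine sum_congr rfl fun k _ => sum_congr rfl fun p _ => ?_
  ring

lemma exists_eq_smul_one_iff_matrixEntries (b : OrthonormalBasis ι 𝕜 E) (T : E →L[𝕜] E) :
    (∃ r : 𝕜, T = r • 1) ↔
      matrixEntries b 1 = 0 ∨ ∃ r : 𝕜, matrixEntries b T = r • matrixEntries b 1 := by
  constructor
  · rintro ⟨r, rfl⟩
    exact Or.inr ⟨r, map_smul _ _ _⟩
  rintro (h | ⟨r, h⟩)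
  · have h1 : (1 : E →L[𝕜] E) = 0 := matrixEntries_injective b (h.trans (map_zero _).symm)
    refine ⟨0, ContinuousLinearMap.ext fun x => ?_⟩
    have hx : x = 0 := by simpa using congr($h1 x)
    simp [hx]
  · exact ⟨r, matrixEntries_injective b (h.trans (map_smul _ _ _).symm)⟩

lemma inner_matrixEntries_one_frameOperator (b : OrthonormalBasis ι 𝕜 E) (v : κ → E) :
    ⟪matrixEntries b 1, matrixEntries b (frameOperator 𝕜 v)⟫_𝕜 = ((∑ l, ‖v l‖ ^ 2 : ℝ) : 𝕜) := by
  rw [inner_matrixEntries_one, sum_inner_frameOperator_self]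
  push_cast
  rfl

section FiniteDimensional

variable [FiniteDimensional 𝕜 E]

theorem sq_sum_norm_sq_le_finrank_mul_framePotential (v : κ → E) :
    (∑ l, ‖v l‖ ^ 2) ^ 2 ≤ finrank 𝕜 E * framePotential 𝕜 v := by
  set b := stdOrthonormalBasis 𝕜 E
  have hCS :=
    norm_inner_le_norm (𝕜 := 𝕜) (matrixEntries b 1) (matrixEntries b (frameOperator 𝕜 v))
  rw [inner_matrixEntries_one_frameOperator, RCLike.norm_of_nonneg (by positivity)] at hCS
  calc (∑ l, ‖v l‖ ^ 2) ^ 2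
      ≤ (‖matrixEntries b 1‖ * ‖matrixEntries b (frameOperator 𝕜 v)‖) ^ 2 := by gcongr
    _ = finrank 𝕜 E * framePotential 𝕜 v := by
      rw [mul_pow, norm_matrixEntries_one_sq, norm_matrixEntries_frameOperator_sq, Fintype.card_fin]

theorem finrank_mul_framePotential_eq_iff (v : κ → E) :
    finrank 𝕜 E * framePotential 𝕜 v = (∑ l, ‖v l‖ ^ 2) ^ 2 ↔
      ∃ r : 𝕜, frameOperator 𝕜 v = r • 1 := by
  set b := stdOrthonormalBasis 𝕜 E
  set x := matrixEntries b 1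
  set y := matrixEntries b (frameOperator 𝕜 v)
  have hxy : ‖⟪x, y⟫_𝕜‖ = ∑ l, ‖v l‖ ^ 2 := by
    rw [inner_matrixEntries_one_frameOperator, RCLike.norm_of_nonneg (by positivity)]
  have hCS : ‖⟪x, y⟫_𝕜‖ = ‖x‖ * ‖y‖ ↔ x = 0 ∨ ∃ r : 𝕜, y = r • x :=
    (norm_inner_eq_norm_tfae 𝕜 x y).out 0 2
  have hx : ‖x‖ ^ 2 = finrank 𝕜 E := by rw [norm_matrixEntries_one_sq, Fintype.card_fin]
  rw [exists_eq_smul_one_iff_matrixEntries b, ← hCS, ← hxy, ← hx,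
    ← norm_matrixEntries_frameOperator_sq b, ← mul_pow, eq_comm,
    pow_left_inj₀ (by positivity) (by positivity) two_ne_zero]

theorem exists_pos_frameOperator_eq_smul_one_iff {v : κ → E} (hv : ∃ j, v j ≠ 0) :
    (∃ c : ℝ, 0 < c ∧ frameOperator 𝕜 v = (c : 𝕜) • 1) ↔ ∃ r : 𝕜, frameOperator 𝕜 v = r • 1 := by
  refine ⟨fun ⟨c, _, hc⟩ => ⟨c, hc⟩, fun ⟨r, hr⟩ => ?_⟩
  set b := stdOrthonormalBasis 𝕜 E
  have htrace := inner_matrixEntries_one_frameOperator b v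
  rw [hr, map_smul, inner_smul_right, inner_self_eq_norm_sq_to_K, ← RCLike.ofReal_pow,
    norm_matrixEntries_one_sq, Fintype.card_fin] at htrace
  have hpos : 0 < ∑ l, ‖v l‖ ^ 2 := by
    obtain ⟨j, hj⟩ := hv
    exact sum_pos' (fun l _ => by positivity) ⟨j, mem_univ j, by positivity⟩
  have hdim : (finrank 𝕜 E : ℝ) ≠ 0 := by
    intro h
    rw [h, RCLike.ofReal_zero, mul_zero, eq_comm, RCLike.ofReal_eq_zero] at htrace
    exact hpos.ne' htrace
  refine ⟨(∑ l, ‖v l‖ ^ 2) / finrank 𝕜 E, by positivity, ?_⟩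
  rw [hr, RCLike.ofReal_div, ← htrace, mul_div_cancel_right₀ _ (RCLike.ofReal_ne_zero.mpr hdim)]

end FiniteDimensional

/-- Variational characterisation of tight frames for `ℂ^d`:
`Σ Σ |⟨v_j,v_k⟩|² ≥ (1/d)(Σ ‖v‖²)²`, with equality iff `(v_j)` is a tight frame,
i.e. the frame operator `x ↦ Σ_j ⟨v_j,x⟩ v_j` is a positive multiple of the identity. -/
theorem tight_frame_variational_characterisation (d : ℕ) (hd : 1 ≤ d)
    (n : ℕ) (v : Fin n → EuclideanSpace ℂ (Fin d)) (hv : ∃ j, v j ≠ 0) :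
    (1 / d) * (∑ l, ‖v l‖ ^ 2) ^ 2 ≤ ∑ j, ∑ k, ‖(inner ℂ (v j) (v k) : ℂ)‖ ^ 2 ∧
    ((∑ j, ∑ k, ‖(inner ℂ (v j) (v k) : ℂ)‖ ^ 2 = (1 / d) * (∑ l, ‖v l‖ ^ 2) ^ 2) ↔
      ∃ c : ℝ, 0 < c ∧ ∀ x : EuclideanSpace ℂ (Fin d),
        ∑ j, (inner ℂ (v j) x : ℂ) • v j = (c : ℂ) • x) := by
  have hle := sq_sum_norm_sq_le_finrank_mul_framePotential (𝕜 := ℂ) v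
  have heq := finrank_mul_framePotential_eq_iff (𝕜 := ℂ) v
  rw [finrank_euclideanSpace_fin] at hle heq
  have hd' : (0 : ℝ) < d := by exact_mod_cast hd
  rw [← exists_pos_frameOperator_eq_smul_one_iff hv] at heq
  simp only [frameOperator_eq_smul_one_iff] at heq
  change _ ≤ framePotential ℂ v ∧ (framePotential ℂ v = _ ↔ _)
  rw [one_div_mul_eq_div, div_le_iff₀ hd', eq_div_iff hd'.ne', mul_comm (framePotential ℂ v)]
  exact ⟨hle, heq⟩
end

section
/- Let z_1,…,z_n be complex numbers, not all zero, viewed as vectors (x_j, y_j) in ℝ². Then (x_j,y_j) is a tight frame for ℝ² if and only if Σ_j z_j² = 0. -/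
lemma term_eq (w x : ℂ) : ((starRingEnd ℂ) w * x).re • w =
    ((Complex.normSq w : ℂ) * x + w ^ 2 * (starRingEnd ℂ) x) / 2 := by
  have h2 := Complex.add_conj ((starRingEnd ℂ) w * x)
  simp only [map_mul, Complex.conj_conj] at h2
  have h : ((((starRingEnd ℂ) w * x).re : ℝ) : ℂ)
      = ((starRingEnd ℂ) w * x + w * (starRingEnd ℂ) x) / 2 := by
    push_cast at h2
    linear_combination -h2 / 2
  have h3 : (starRingEnd ℂ) w * w = (Complex.normSq w : ℂ) := by
    rw [mul_comm, Complex.mul_conj]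
  rw [Complex.real_smul, h]
  linear_combination (x / 2) * h3

/-- Complex numbers `z_1,…,z_n`, not all zero, viewed as vectors in `ℝ² ≅ ℂ`
(with the real inner product `⟨z,x⟩ = Re(conj z · x)`), form a tight frame for `ℝ²`
iff `Σ_j z_j² = 0`. -/
theorem tight_frame_R2_iff_sum_squares_zero (n : ℕ)
    (z : Fin n → ℂ) (hz : ∃ j, z j ≠ 0) :
    (∃ c : ℝ, 0 < c ∧ ∀ x : ℂ,
        ∑ j, ((starRingEnd ℂ) (z j) * x).re • z j = c • x) ↔
    ∑ j, (z j) ^ 2 = 0 := by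
  have key : ∀ x : ℂ, ∑ j, ((starRingEnd ℂ) (z j) * x).re • z j
      = (((∑ j, Complex.normSq (z j) : ℝ) : ℂ) * x + (∑ j, (z j) ^ 2) * (starRingEnd ℂ) x) / 2 := by
    intro x
    simp only [term_eq]
    rw [← Finset.sum_div, Finset.sum_add_distrib, ← Finset.sum_mul, ← Finset.sum_mul]
    push_cast
    ring_nf
  set S : ℂ := ((∑ j, Complex.normSq (z j) : ℝ) : ℂ) with hSdef
  set Q : ℂ := ∑ j, (z j) ^ 2 with hQdef
  constructor
  · rintro ⟨c, hc, hF⟩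
    have h1 := hF 1
    have hI := hF Complex.I
    rw [key] at h1 hI
    simp only [Complex.real_smul, map_one, mul_one, Complex.conj_I] at h1 hI
    linear_combination h1 + Complex.I * hI + ((c : ℂ) - (S - Q) / 2) * Complex.I_mul_I
  · intro hQ
    have hS : 0 < ∑ j, Complex.normSq (z j) := by
      obtain ⟨j, hj⟩ := hz
      apply Finset.sum_pos' (fun i _ => Complex.normSq_nonneg _)
      exact ⟨j, Finset.mem_univ j, Complex.normSq_pos.mpr hj⟩
    refine ⟨(∑ j, Complex.normSq (z j)) / 2, by positivity, fun x => ?_⟩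
    rw [key, hQ, Complex.real_smul, hSdef]
    push_cast
    ring
end

section
/- Let v_1,…,v_n be unit vectors in ℂ^d, let F(z) = Σ_{(p,q)∈τ} f_{pq} Q_{pq}^{(d)}(z) with f_{pq} ∈ ℂ nonzero exactly for (p,q) ∈ τ, and suppose F(1) = 1 and F(⟨v_j,v_k⟩) = 0 for all j ≠ k. Then n ≤ Σ_{(p,q)∈τ} dim H(p,q). -/
/-- The complex Gegenbauer (disk) polynomial `Q_{pq}^{(d)}`, as a function of
`z` and `conj z`:
`Q_{pq}^{(d)}(z) = ((p+q+d−1)/(d−1)!) Σ_{j=0}^{min(p,q)} (−1)^j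
  ((d+p+q−j−2)!/(j!(p−j)!(q−j)!)) z^{p−j} conj(z)^{q−j}`. -/
noncomputable def Qc (d p q : ℕ) (z : ℂ) : ℂ :=
  (((p + q + d - 1 : ℕ) : ℂ) / (Nat.factorial (d - 1) : ℂ)) *
    ∑ j ∈ Finset.range (min p q + 1),
      (-1 : ℂ) ^ j *
        ((Nat.factorial (d + p + q - j - 2) : ℂ) /
          ((Nat.factorial j : ℂ) * (Nat.factorial (p - j) : ℂ) *
            (Nat.factorial (q - j) : ℂ))) *
        z ^ (p - j) * ((starRingEnd ℂ) z) ^ (q - j)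

/-- The formal "complex Laplacian" `Σ_i ∂/∂z_i ∂/∂w_i` on polynomials in the variables
`z_1,…,z_d` (the `Sum.inl` variables) and `w_1,…,w_d` (the `Sum.inr` variables,
representing `conj z_1,…,conj z_d`). -/
noncomputable def complexLaplacian (d : ℕ) :
    MvPolynomial (Fin d ⊕ Fin d) ℂ →ₗ[ℂ] MvPolynomial (Fin d ⊕ Fin d) ℂ :=
  ∑ i : Fin d,
    (MvPolynomial.pderiv (Sum.inl i)).toLinearMap ∘ₗ
      (MvPolynomial.pderiv (Sum.inr i)).toLinearMap

/-- `H(p,q)`: harmonic polynomials on `ℂ^d`, homogeneous of degree `p` in `z` and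
degree `q` in `conj z` (the latter modelled by the `Sum.inr` variables). -/
noncomputable def Hpq (d p q : ℕ) : Submodule ℂ (MvPolynomial (Fin d ⊕ Fin d) ℂ) :=
  MvPolynomial.weightedHomogeneousSubmodule ℂ
      (fun i => match i with | Sum.inl _ => 1 | Sum.inr _ => 0) p ⊓
    MvPolynomial.weightedHomogeneousSubmodule ℂ
      (fun i => match i with | Sum.inl _ => 0 | Sum.inr _ => 1) q ⊓
    LinearMap.ker (complexLaplacian d)

/-! For a unit vector `η`, the polynomial `zonal p q η`, obtained from `Qc d p q` by substituting
`⟪η, z⟫` for `z` and inserting the powers of `|z|²` that make every term of bidegree `(p, q)`, is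
harmonic, so it lies in `H(p,q)`; on the unit sphere it agrees with `z ↦ Q_{pq}(⟪η, z⟫)`.
Hence `P_j = Σ_{(p,q) ∈ τ} f_{pq} • zonal p q v_j` lies in `Σ_{(p,q) ∈ τ} H(p,q)` and takes the
value `F ⟪v_j, v_k⟫ = δ_{jk}` at `v_k`. So the `P_j` are linearly independent, and `n` is at
most the dimension of that sum. -/

open MvPolynomial Finset

theorem Submodule.finrank_finset_sup_le {K V ι : Type*} [DivisionRing K] [AddCommGroup V]
    [Module K V] (s : Finset ι) (S : ι → Submodule K V) [∀ i, FiniteDimensional K (S i)] :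
    Module.finrank K ↥(s.sup S) ≤ ∑ i ∈ s, Module.finrank K (S i) := by
  classical
  induction s using Finset.induction_on with
  | empty => simp
  | insert i s hi ih =>
    rw [Finset.sup_insert, Finset.sum_insert hi]
    exact (Submodule.finrank_add_le_finrank_add_finrank _ _).trans (Nat.add_le_add_left ih _)

theorem linearIndependent_of_apply_eq_single {K M ι : Type*} [Semiring K] [AddCommMonoid M]
    [Module K M] [DecidableEq ι] {P : ι → M} (e : ι → M →ₗ[K] K)
    (h : ∀ j k, e k (P j) = (Pi.single j 1 : ι → K) k) : LinearIndependent K P := by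
  have hcomp : LinearMap.pi e ∘ P = fun j => Pi.single j 1 := funext fun j => funext (h j)
  exact .of_comp _ (hcomp ▸ Pi.linearIndependent_single_one ι K)

theorem natCast_mul_pow_sub_one_mul {R : Type*} [Semiring R] (n : ℕ) (x : R) :
    (n : R) * (x ^ (n - 1) * x) = n * x ^ n := by
  rcases eq_or_ne n 0 with rfl | hn
  · simp
  · rw [pow_sub_one_mul hn]

theorem Finset.sum_range_succ_add_eq_zero {M : Type*} [AddCommMonoid M] {A B : ℕ → M} {m : ℕ}
    (hA : A 0 = 0) (hB : B m = 0) (hAB : ∀ j < m, A (j + 1) + B j = 0) :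
    ∑ j ∈ range (m + 1), (A j + B j) = 0 := by
  rw [sum_add_distrib, sum_range_succ' A, sum_range_succ B, hA, hB, add_zero, add_zero,
    ← sum_add_distrib]
  exact sum_eq_zero fun j hj => hAB j (mem_range.mp hj)

theorem MvPolynomial.IsWeightedHomogeneous.add_weight {σ R M : Type*} [CommSemiring R]
    [AddCommMonoid M] {w₁ w₂ : σ → M} {φ : MvPolynomial σ R} {m n : M}
    (h₁ : φ.IsWeightedHomogeneous w₁ m) (h₂ : φ.IsWeightedHomogeneous w₂ n) :
    φ.IsWeightedHomogeneous (w₁ + w₂) (m + n) := by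
  intro c hc
  rw [← h₁ hc, ← h₂ hc]
  simp [Finsupp.weight_apply, Finsupp.sum_add]

namespace ZonalHarmonic

variable {d : ℕ}

local notation "𝒫" => MvPolynomial (Fin d ⊕ Fin d) ℂ

noncomputable def evalAt (ξ : EuclideanSpace ℂ (Fin d)) : 𝒫 →ₐ[ℂ] ℂ :=
  aeval (Sum.elim ξ fun i => starRingEnd ℂ (ξ i))

noncomputable def innerPoly (η : EuclideanSpace ℂ (Fin d)) : 𝒫 :=
  ∑ i, C (starRingEnd ℂ (η i)) * X (Sum.inl i)

noncomputable def conjInnerPoly (η : EuclideanSpace ℂ (Fin d)) : 𝒫 :=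
  ∑ i, C (η i) * X (Sum.inr i)

variable (d) in
noncomputable def normSqPoly : 𝒫 :=
  ∑ i, X (Sum.inl i) * X (Sum.inr i)

theorem evalAt_innerPoly (ξ η : EuclideanSpace ℂ (Fin d)) :
    evalAt ξ (innerPoly η) = inner ℂ η ξ := by
  simp [evalAt, innerPoly, PiLp.inner_apply, mul_comm]

theorem evalAt_conjInnerPoly (ξ η : EuclideanSpace ℂ (Fin d)) :
    evalAt ξ (conjInnerPoly η) = starRingEnd ℂ (inner ℂ η ξ) := by
  simp [evalAt, conjInnerPoly, PiLp.inner_apply, mul_comm]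

theorem evalAt_normSqPoly (ξ : EuclideanSpace ℂ (Fin d)) :
    evalAt ξ (normSqPoly d) = inner ℂ ξ ξ := by
  simp only [evalAt, normSqPoly, PiLp.inner_apply, RCLike.inner_apply, map_sum, map_mul, aeval_X,
    Sum.elim_inl, Sum.elim_inr]

@[simp] theorem pderiv_inl_innerPoly (η : EuclideanSpace ℂ (Fin d)) (i : Fin d) :
    pderiv (Sum.inl i) (innerPoly η) = C (starRingEnd ℂ (η i)) := by
  simp [innerPoly, pderiv_X, Pi.single_apply]

@[simp] theorem pderiv_inr_innerPoly (η : EuclideanSpace ℂ (Fin d)) (i : Fin d) :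
    pderiv (Sum.inr i) (innerPoly η) = 0 := by
  simp [innerPoly, pderiv_X]

@[simp] theorem pderiv_inl_conjInnerPoly (η : EuclideanSpace ℂ (Fin d)) (i : Fin d) :
    pderiv (Sum.inl i) (conjInnerPoly η) = 0 := by
  simp [conjInnerPoly, pderiv_X]

@[simp] theorem pderiv_inr_conjInnerPoly (η : EuclideanSpace ℂ (Fin d)) (i : Fin d) :
    pderiv (Sum.inr i) (conjInnerPoly η) = C (η i) := by
  simp [conjInnerPoly, pderiv_X, Pi.single_apply]

@[simp] theorem pderiv_inl_normSqPoly (i : Fin d) :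
    pderiv (Sum.inl i) (normSqPoly d) = X (Sum.inr i) := by
  simp [normSqPoly, pderiv_X, Pi.single_apply]

@[simp] theorem pderiv_inr_normSqPoly (i : Fin d) :
    pderiv (Sum.inr i) (normSqPoly d) = X (Sum.inl i) := by
  simp [normSqPoly, pderiv_X, Pi.single_apply]

theorem complexLaplacian_apply (P : 𝒫) :
    complexLaplacian d P = ∑ i, pderiv (Sum.inl i) (pderiv (Sum.inr i) P) := by
  simp [complexLaplacian]

theorem sum_C_conj_mul_C_of_norm_eq_one {η : EuclideanSpace ℂ (Fin d)} (hη : ‖η‖ = 1) :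
    ∑ i, C (starRingEnd ℂ (η i)) * C (η i) = (1 : 𝒫) := by
  have : inner ℂ η η = 1 := by simp [inner_self_eq_norm_sq_to_K, hη]
  simp only [← map_mul, ← map_sum, ← map_one C, ← this, PiLp.inner_apply, RCLike.inner_apply,
    mul_comm]

theorem complexLaplacian_monomial {η : EuclideanSpace ℂ (Fin d)} (hη : ‖η‖ = 1) (j a b : ℕ) :
    complexLaplacian d (normSqPoly d ^ j * innerPoly η ^ a * conjInnerPoly η ^ b) =
      ((j * (d + a + b + j - 1) : ℕ) : ℂ) •
          (normSqPoly d ^ (j - 1) * innerPoly η ^ a * conjInnerPoly η ^ b) +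
        ((a * b : ℕ) : ℂ) •
          (normSqPoly d ^ j * innerPoly η ^ (a - 1) * conjInnerPoly η ^ (b - 1)) := by
  set R := normSqPoly d
  set U := innerPoly η
  set V := conjInnerPoly η
  have hsecond : ∀ i, pderiv (Sum.inl i) (pderiv (Sum.inr i) (R ^ j * U ^ a * V ^ b)) =
      ((j * (j - 1 : ℕ) : 𝒫) * (R ^ (j - 1 - 1) * U ^ a * V ^ b)) *
          (X (Sum.inl i) * X (Sum.inr i)) +
        ((j * a : 𝒫) * (R ^ (j - 1) * U ^ (a - 1) * V ^ b)) *
          (C (starRingEnd ℂ (η i)) * X (Sum.inl i)) +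
        ((j * b : 𝒫) * (R ^ (j - 1) * U ^ a * V ^ (b - 1))) * (C (η i) * X (Sum.inr i)) +
        ((a * b : 𝒫) * (R ^ j * U ^ (a - 1) * V ^ (b - 1))) *
          (C (starRingEnd ℂ (η i)) * C (η i)) +
        (j : 𝒫) * (R ^ (j - 1) * U ^ a * V ^ b) := by
    intro i
    simp only [R, U, V, map_add, pderiv_mul, pderiv_pow, pderiv_inl_innerPoly,
      pderiv_inr_innerPoly, pderiv_inl_conjInnerPoly, pderiv_inr_conjInnerPoly,
      pderiv_inl_normSqPoly, pderiv_inr_normSqPoly, Derivation.map_natCast, pderiv_C,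
      pderiv_X_self, mul_zero, zero_mul, add_zero, zero_add, mul_one]
    ring
  rw [complexLaplacian_apply, sum_congr rfl fun i _ => hsecond i]
  simp only [sum_add_distrib, ← mul_sum, sum_C_conj_mul_C_of_norm_eq_one hη, sum_const, card_univ,
    Fintype.card_fin]
  rw [show ∑ i, X (Sum.inl i) * X (Sum.inr i) = R from rfl,
    show ∑ i, C (starRingEnd ℂ (η i)) * X (Sum.inl i) = U from rfl,
    show ∑ i, C (η i) * X (Sum.inr i) = V from rfl]
  have hcoef : j * (j - 1) + j * (d + a + b) = j * (d + a + b + j - 1) := by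
    rcases j with _ | j
    · simp
    · rw [show d + a + b + (j + 1) - 1 = d + a + b + j by omega, Nat.add_sub_cancel]
      ring
  simp only [← hcoef, Nat.cast_smul_eq_nsmul, nsmul_eq_mul]
  push_cast
  linear_combination (j * (U ^ a * V ^ b)) * natCast_mul_pow_sub_one_mul (j - 1) R +
    (j * R ^ (j - 1) * V ^ b) * natCast_mul_pow_sub_one_mul a U +
    (j * R ^ (j - 1) * U ^ a) * natCast_mul_pow_sub_one_mul b V

variable (d) in
noncomputable def zonalCoeff (p q j : ℕ) : ℂ :=
  (Nat.factorial (d + p + q - j - 2) : ℂ) /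
    ((Nat.factorial j : ℂ) * (Nat.factorial (p - j) : ℂ) * (Nat.factorial (q - j) : ℂ))

noncomputable def zonal (p q : ℕ) (η : EuclideanSpace ℂ (Fin d)) : 𝒫 :=
  (((p + q + d - 1 : ℕ) : ℂ) / (Nat.factorial (d - 1) : ℂ)) •
    ∑ j ∈ range (min p q + 1), ((-1 : ℂ) ^ j * zonalCoeff d p q j) •
      (normSqPoly d ^ j * innerPoly η ^ (p - j) * conjInnerPoly η ^ (q - j))

theorem evalAt_zonal (p q : ℕ) (η : EuclideanSpace ℂ (Fin d)) {ξ : EuclideanSpace ℂ (Fin d)}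
    (hξ : ‖ξ‖ = 1) : evalAt ξ (zonal p q η) = Qc d p q (inner ℂ η ξ) := by
  have hξξ : inner ℂ ξ ξ = 1 := by simp [inner_self_eq_norm_sq_to_K, hξ]
  simp only [zonal, Qc, zonalCoeff, map_smul, map_sum, map_mul, map_pow, evalAt_normSqPoly,
    evalAt_innerPoly, evalAt_conjInnerPoly, hξξ, one_pow, one_mul, smul_eq_mul, mul_assoc]

section Homogeneity

variable {w : Fin d ⊕ Fin d → ℕ} {a b : ℕ}

theorem isWeightedHomogeneous_innerPoly (ha : ∀ i, w (Sum.inl i) = a)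
    (η : EuclideanSpace ℂ (Fin d)) : (innerPoly η).IsWeightedHomogeneous w a :=
  .sum _ _ _ fun i _ => ha i ▸ (isWeightedHomogeneous_X ℂ w _).C_mul _

theorem isWeightedHomogeneous_conjInnerPoly (hb : ∀ i, w (Sum.inr i) = b)
    (η : EuclideanSpace ℂ (Fin d)) : (conjInnerPoly η).IsWeightedHomogeneous w b :=
  .sum _ _ _ fun i _ => hb i ▸ (isWeightedHomogeneous_X ℂ w _).C_mul _

theorem isWeightedHomogeneous_normSqPoly (ha : ∀ i, w (Sum.inl i) = a)
    (hb : ∀ i, w (Sum.inr i) = b) : (normSqPoly d).IsWeightedHomogeneous w (a + b) :=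
  .sum _ _ _ fun i _ =>
    ha i ▸ hb i ▸ (isWeightedHomogeneous_X ℂ w _).mul (isWeightedHomogeneous_X ℂ w _)

theorem isWeightedHomogeneous_zonal (ha : ∀ i, w (Sum.inl i) = a) (hb : ∀ i, w (Sum.inr i) = b)
    (p q : ℕ) (η : EuclideanSpace ℂ (Fin d)) :
    (zonal p q η).IsWeightedHomogeneous w (p * a + q * b) := by
  rw [← mem_weightedHomogeneousSubmodule]
  refine Submodule.smul_mem _ _ (Submodule.sum_mem _ fun j hj => Submodule.smul_mem _ _ ?_)
  obtain ⟨p', rfl⟩ : ∃ p', p = j + p' := ⟨p - j, by grind⟩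
  obtain ⟨q', rfl⟩ : ∃ q', q = j + q' := ⟨q - j, by grind⟩
  have hdeg :
      j • (a + b) + (j + p' - j) • a + (j + q' - j) • b = (j + p') * a + (j + q') * b := by
    simp only [Nat.add_sub_cancel_left, smul_eq_mul]
    ring
  rw [mem_weightedHomogeneousSubmodule, ← hdeg]
  exact (((isWeightedHomogeneous_normSqPoly ha hb).pow j).mul
    ((isWeightedHomogeneous_innerPoly ha η).pow _)).mul
      ((isWeightedHomogeneous_conjInnerPoly hb η).pow _)

end Homogeneity

theorem zonalCoeff_recurrence (hd : 1 ≤ d) {p q j : ℕ} (hjp : j < p) (hjq : j < q) :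
    (-1 : ℂ) ^ (j + 1) * zonalCoeff d p q (j + 1) * ((j + 1) * (d + p + q - j - 2) : ℕ) +
      (-1 : ℂ) ^ j * zonalCoeff d p q j * ((p - j) * (q - j) : ℕ) = 0 := by
  obtain ⟨a, ha⟩ : ∃ a, p - j = a + 1 := ⟨p - j - 1, by omega⟩
  obtain ⟨b, hb⟩ : ∃ b, q - j = b + 1 := ⟨q - j - 1, by omega⟩
  obtain ⟨t, ht⟩ : ∃ t, d + p + q - j - 2 = t + 1 := ⟨d + p + q - j - 3, by omega⟩
  rw [zonalCoeff, zonalCoeff, ha, hb, ht, show d + p + q - (j + 1) - 2 = t by omega,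
    show p - (j + 1) = a by omega, show q - (j + 1) = b by omega]
  simp only [Nat.factorial_succ, pow_succ]
  push_cast
  field_simp
  ring

theorem complexLaplacian_zonal (p q : ℕ) {η : EuclideanSpace ℂ (Fin d)} (hη : ‖η‖ = 1) :
    complexLaplacian d (zonal p q η) = 0 := by
  obtain rfl | hd := Nat.eq_zero_or_pos d
  · simp [Subsingleton.elim η 0] at hη
  rw [zonal, map_smul, map_sum]
  simp only [map_smul, complexLaplacian_monomial hη, smul_add, smul_smul]
  rw [sum_range_succ_add_eq_zero, smul_zero]
  · simp
  · have hmin : (p - min p q) * (q - min p q) = 0 := by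
      rcases le_total p q with h | h <;> simp [h]
    simp [hmin]
  · intro j hj
    have hjp : j < p := by grind
    have hjq : j < q := by grind
    rw [show p - (j + 1) = p - j - 1 by omega, show q - (j + 1) = q - j - 1 by omega,
      Nat.add_sub_cancel,
      show d + (p - j - 1) + (q - j - 1) + (j + 1) - 1 = d + p + q - j - 2 by omega, ← add_smul,
      zonalCoeff_recurrence hd hjp hjq, zero_smul]

theorem zonal_mem_Hpq (p q : ℕ) {η : EuclideanSpace ℂ (Fin d)} (hη : ‖η‖ = 1) :
    zonal p q η ∈ Hpq d p q := by
  refine ⟨⟨?_, ?_⟩, complexLaplacian_zonal p q hη⟩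
  all_goals rw [SetLike.mem_coe, mem_weightedHomogeneousSubmodule]
  · convert isWeightedHomogeneous_zonal (w := Sum.elim 1 0) (fun _ => rfl) (fun _ => rfl) p q η
      with i
    · cases i <;> rfl
    · simp
  · convert isWeightedHomogeneous_zonal (w := Sum.elim 0 1) (fun _ => rfl) (fun _ => rfl) p q η
      with i
    · cases i <;> rfl
    · simp

instance (p q : ℕ) : FiniteDimensional ℂ (Hpq d p q) := by
  have := Module.Finite.iff_fg.mpr (homogeneousSubmodule_fg (σ := Fin d ⊕ Fin d) (R := ℂ) (p + q))
  refine Submodule.finiteDimensional_of_le (S₂ := homogeneousSubmodule _ ℂ (p + q))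
    fun P hP => ?_
  rw [mem_homogeneousSubmodule, IsHomogeneous]
  convert hP.1.1.add_weight hP.1.2
  ext (_ | _) <;> rfl

end ZonalHarmonic

open ZonalHarmonic in
theorem annihilator_absolute_bound_general (d : ℕ)
    (τ : Finset (ℕ × ℕ)) (f : ℕ × ℕ → ℂ)
    (F : ℂ → ℂ)
    (hF : ∀ z, F z = ∑ pq ∈ τ, f pq * Qc d pq.1 pq.2 z)
    (hF1 : F 1 = 1)
    (n : ℕ) (v : Fin n → EuclideanSpace ℂ (Fin d))
    (hv : ∀ j, ‖v j‖ = 1)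
    (hann : ∀ j k, j ≠ k → F (inner ℂ (v j) (v k) : ℂ) = 0) :
    n ≤ ∑ pq ∈ τ, Module.finrank ℂ (Hpq d pq.1 pq.2) := by
  let P : Fin n → MvPolynomial (Fin d ⊕ Fin d) ℂ := fun j =>
    ∑ pq ∈ τ, f pq • zonal pq.1 pq.2 (v j)
  let S : Submodule ℂ (MvPolynomial (Fin d ⊕ Fin d) ℂ) := τ.sup fun pq => Hpq d pq.1 pq.2
  have hP_mem : ∀ j, P j ∈ S := fun j =>
    Submodule.sum_mem _ fun pq hpq => le_sup (f := fun pq => Hpq d pq.1 pq.2) hpq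
      (Submodule.smul_mem _ _ (zonal_mem_Hpq _ _ (hv j)))
  have hP_eval : ∀ j k, evalAt (v k) (P j) = (Pi.single j 1 : Fin n → ℂ) k := by
    intro j k
    simp only [P, map_sum, map_smul, evalAt_zonal _ _ _ (hv k), smul_eq_mul, ← hF]
    rcases eq_or_ne j k with rfl | hjk
    · simp [inner_self_eq_norm_sq_to_K, hv, hF1]
    · simp [hann j k hjk, hjk.symm]
  have hP_indep : LinearIndependent ℂ P :=
    linearIndependent_of_apply_eq_single (fun k => (evalAt (v k)).toLinearMap) hP_eval
  calc n = Module.finrank ℂ (Submodule.span ℂ (Set.range P)) := by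
        rw [finrank_span_eq_card hP_indep, Fintype.card_fin]
    _ ≤ Module.finrank ℂ S :=
        Submodule.finrank_mono (Submodule.span_le.mpr (Set.range_subset_iff.mpr hP_mem))
    _ ≤ _ := Submodule.finrank_finset_sup_le _ _

/-- Absolute bound: if `F = Σ_{(p,q)∈τ} f_{pq} Q_{pq}^{(d)}` (with `f_{pq} ≠ 0` exactly
on `τ`) satisfies `F(1) = 1` and annihilates all the inner products `⟨v_j,v_k⟩`,
`j ≠ k`, of unit vectors `v_1,…,v_n` in `ℂ^d`, then `n ≤ Σ_{(p,q)∈τ} dim H(p,q)`. -/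
theorem annihilator_absolute_bound (d : ℕ) (hd : 1 ≤ d)
    (τ : Finset (ℕ × ℕ)) (f : ℕ × ℕ → ℂ)
    (hsupp : ∀ pq : ℕ × ℕ, f pq ≠ 0 ↔ pq ∈ τ)
    (F : ℂ → ℂ)
    (hF : ∀ z, F z = ∑ pq ∈ τ, f pq * Qc d pq.1 pq.2 z)
    (hF1 : F 1 = 1)
    (n : ℕ) (v : Fin n → EuclideanSpace ℂ (Fin d))
    (hv : ∀ j, ‖v j‖ = 1)
    (hann : ∀ j k, j ≠ k → F (inner ℂ (v j) (v k) : ℂ) = 0) :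
    n ≤ ∑ pq ∈ τ, Module.finrank ℂ (Hpq d pq.1 pq.2) :=
  annihilator_absolute_bound_general d τ f F hF hF1 n v hv hann
end

section
/- Let v_1,…,v_n be distinct unit vectors in ℂ^d such that the real parts of the inner products ⟨v_j,v_k⟩ (j ≠ k) take at most s distinct values. Then n ≤ C(s+2d−1, 2d−1) + C(s+2d−2, 2d−1). -/
/-!
Under `Re ⟨·,·⟩`, `ℂ^d` is Euclidean space of real dimension `2d`, so the `v j` are unit vectors
of `ℝ^{2d}` whose pairwise inner products lie in a set `b` of at most `s` values, none equal
to `1`. The polynomials `F_j(z) = ∏_{α ∈ b} (⟨v_j, z⟩ - α)` have degree at most `s` and satisfy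
`F_j(v_k) = 0` for `k ≠ j`, `F_j(v_j) ≠ 0`, so their restrictions to the `v k` are linearly
independent. On the sphere `|z|² = 1`, so multiplying the degree-`k` component of `F_j` by
`|z|^(2⌊(s-k)/2⌋)` turns `F_j` into a sum of homogeneous polynomials of degrees `s` and `s - 1`,
spaces of dimensions `C(s+2d-1, s)` and `C(s+2d-2, s-1)`.
-/

open MvPolynomial Finset Module
open scoped InnerProductSpace

namespace MvPolynomial

instance finite_homogeneousSubmodule {σ R : Type*} [Finite σ] [CommSemiring R] (n : ℕ) :
    Module.Finite R (homogeneousSubmodule σ R n) :=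
  Module.Finite.iff_fg.2 (homogeneousSubmodule_fg σ R n)

theorem finrank_homogeneousSubmodule {σ K : Type*} [Fintype σ] [Field K] (n : ℕ) :
    finrank K (homogeneousSubmodule σ K n) = (Fintype.card σ + n - 1).choose n := by
  classical
  have hdeg : {d : σ →₀ ℕ | d.degree = n} = ((univ : Finset σ).finsuppAntidiag n : Set _) := by
    ext d
    simp [mem_finsuppAntidiag, Finsupp.degree_eq_sum]
  rw [homogeneousSubmodule_eq_finsupp_supported, hdeg,
    (AddMonoidAlgebra.supportedEquivFinsupp _).finrank_eq, finrank_finsupp_self]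
  simp [card_finsuppAntidiag_nat_eq_choose]

theorem sum_homogeneousComponent_of_totalDegree_le {σ R : Type*} [CommSemiring R]
    {p : MvPolynomial σ R} {s : ℕ} (hp : p.totalDegree ≤ s) :
    ∑ k ∈ range (s + 1), homogeneousComponent k p = p := by
  conv_rhs => rw [← sum_homogeneousComponent p]
  exact (sum_subset (range_subset_range.2 (by omega)) fun k _ hk =>
    homogeneousComponent_eq_zero _ _ (by simpa using hk)).symm

theorem exists_mem_homogeneousSubmodule_sup_eval_eq {σ R : Type*} [CommRing R]
    {N : MvPolynomial σ R} (hN : N.IsHomogeneous 2) {p : MvPolynomial σ R} {s : ℕ}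
    (hp : p.totalDegree ≤ s) :
    ∃ q ∈ homogeneousSubmodule σ R s ⊔ homogeneousSubmodule σ R (s - 1),
      ∀ x, eval x N = 1 → eval x q = eval x p := by
  refine ⟨∑ k ∈ range (s + 1), homogeneousComponent k p * N ^ ((s - k) / 2),
    sum_mem fun k hk => ?_, fun x hx => ?_⟩
  · have hhom := (homogeneousComponent_isHomogeneous k p).mul (hN.pow ((s - k) / 2))
    rw [mem_range] at hk
    rcases Nat.even_or_odd (s - k) with heven | hodd
    · refine Submodule.mem_sup_left ?_
      rwa [show k + 2 * ((s - k) / 2) = s by grind] at hhom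
    · refine Submodule.mem_sup_right ?_
      rwa [show k + 2 * ((s - k) / 2) = s - 1 by grind] at hhom
  · conv_rhs => rw [← sum_homogeneousComponent_of_totalDegree_le hp]
    simp [hx]

theorem isHomogeneous_sum_X_sq {σ R : Type*} [Fintype σ] [CommSemiring R] :
    (∑ i, X i ^ 2 : MvPolynomial σ R).IsHomogeneous 2 :=
  IsHomogeneous.sum _ _ _ fun _ _ => (isHomogeneous_X _ _).pow 2

section Annihilating

variable {R ι : Type*} [CommRing R] [Fintype ι]

noncomputable def annihilatingPolynomial (y : ι → R) (b : Finset R) : MvPolynomial ι R :=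
  ∏ α ∈ b, (∑ i, C (y i) * X i - C α)

theorem eval_annihilatingPolynomial (y z : ι → R) (b : Finset R) :
    eval z (annihilatingPolynomial y b) = ∏ α ∈ b, (y ⬝ᵥ z - α) := by
  simp [annihilatingPolynomial, dotProduct]

theorem totalDegree_annihilatingPolynomial_le (y : ι → R) (b : Finset R) :
    (annihilatingPolynomial y b).totalDegree ≤ b.card := by
  have hlin : (∑ i, C (y i) * X i : MvPolynomial ι R).IsHomogeneous 1 :=
    IsHomogeneous.sum _ _ _ fun _ _ => (isHomogeneous_C _ _).mul (isHomogeneous_X _ _)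
  refine (totalDegree_finsetProd _ _).trans ?_
  simpa using sum_le_card_nsmul b _ 1 fun α _ =>
    (totalDegree_sub_C_le _ _).trans hlin.totalDegree_le

end Annihilating

theorem card_le_finrank_of_dotProduct_mem {K ι κ : Type*} [Field K] [Fintype ι] [Fintype κ]
    (x : κ → ι → K)
    (hx : ∀ k, x k ⬝ᵥ x k = 1) (b : Finset K) (hb : 1 ∉ b) {s : ℕ} (hbs : b.card ≤ s)
    (hxb : ∀ j k, j ≠ k → x j ⬝ᵥ x k ∈ b) :
    Fintype.card κ ≤
      finrank K (homogeneousSubmodule ι K s) + finrank K (homogeneousSubmodule ι K (s - 1)) := by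
  classical
  let ev : MvPolynomial ι K →ₗ[K] κ → K := LinearMap.pi fun k => (aeval (x k)).toLinearMap
  let W := (homogeneousSubmodule ι K s ⊔ homogeneousSubmodule ι K (s - 1)).map ev
  let e : κ → κ → K := fun j k => eval (x k) (annihilatingPolynomial (x j) b)
  have he_mem : ∀ j, e j ∈ W := by
    intro j
    obtain ⟨q, hq, hqp⟩ := exists_mem_homogeneousSubmodule_sup_eval_eq isHomogeneous_sum_X_sq
      ((totalDegree_annihilatingPolynomial_le (x j) b).trans hbs)
    refine Submodule.mem_map.2 ⟨q, hq, ?_⟩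
    ext k
    simp only [ev, LinearMap.pi_apply, AlgHom.toLinearMap_apply]
    exact hqp (x k) (by simpa [dotProduct, sq] using hx k)
  have he_single : e = fun j => Pi.single j (∏ α ∈ b, (1 - α)) := by
    funext j k
    simp only [e, eval_annihilatingPolynomial, Pi.single_apply]
    split_ifs with hkj
    · rw [hkj, hx]
    · exact prod_eq_zero (hxb j k (Ne.symm hkj)) (sub_self _)
  have he_indep : LinearIndependent K e := by
    rw [he_single]
    exact Pi.linearIndependent_single_of_ne_zero fun _ =>
      prod_ne_zero_iff.2 fun α hα => sub_ne_zero.2 fun h => hb (h ▸ hα)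
  calc Fintype.card κ = finrank K (Submodule.span K (Set.range e)) :=
        (finrank_span_eq_card he_indep).symm
    _ ≤ finrank K W :=
        Submodule.finrank_mono (Submodule.span_le.2 (Set.range_subset_iff.2 he_mem))
    _ ≤ finrank K ↥(homogeneousSubmodule ι K s ⊔ homogeneousSubmodule ι K (s - 1)) :=
        Submodule.finrank_map_le _ _
    _ ≤ _ := Submodule.finrank_add_le_finrank_add_finrank _ _

end MvPolynomial

theorem card_le_of_inner_mem {E κ : Type*} [NormedAddCommGroup E] [InnerProductSpace ℝ E]
    [FiniteDimensional ℝ E] [Fintype κ] (v : κ → E) (hv : ∀ k, ‖v k‖ = 1)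
    (hinj : Function.Injective v) (b : Finset ℝ) {s : ℕ} (hbs : b.card ≤ s)
    (hvb : ∀ j k, j ≠ k → ⟪v j, v k⟫_ℝ ∈ b) :
    Fintype.card κ ≤
      (finrank ℝ E + s - 1).choose s + (finrank ℝ E + (s - 1) - 1).choose (s - 1) := by
  let B := stdOrthonormalBasis ℝ E
  let x : κ → Fin (finrank ℝ E) → ℝ := fun k => B.repr (v k)
  have hx : ∀ j k, x j ⬝ᵥ x k = ⟪v j, v k⟫_ℝ := fun j k => by
    rw [← B.repr.inner_map_map, EuclideanSpace.inner_eq_star_dotProduct]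
    simp [x, dotProduct_comm]
  have hne : ∀ j k, j ≠ k → ⟪v j, v k⟫_ℝ ≠ 1 := fun j k hjk h =>
    hjk (hinj ((inner_eq_one_iff_of_norm_eq_one (hv j) (hv k)).1 h))
  have hbound := card_le_finrank_of_dotProduct_mem x
    (fun k => by rw [hx, real_inner_self_eq_norm_sq, hv, one_pow]) (b.erase 1)
    (notMem_erase 1 b) (card_erase_le.trans hbs)
    (fun j k hjk => hx j k ▸ mem_erase.2 ⟨hne j k hjk, hvb j k hjk⟩)
  simpa [finrank_homogeneousSubmodule] using hbound

theorem EuclideanSpace.real_inner_eq_re_inner {ι : Type*} [Fintype ι]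
    (x y : EuclideanSpace ℂ ι) : ⟪x, y⟫_ℝ = (⟪x, y⟫_ℂ).re := by
  simp only [PiLp.inner_apply, Complex.re_sum]
  rfl

/-- If the real parts of the pairwise inner products of `n` distinct unit vectors in
`ℂ^d` take at most `s` distinct values, then `n ≤ C(s+2d−1,2d−1) + C(s+2d−2,2d−1)`. -/
theorem real_part_values_bound (d : ℕ) (hd : 1 ≤ d) (s : ℕ)
    (n : ℕ) (v : Fin n → EuclideanSpace ℂ (Fin d))
    (hv : ∀ j, ‖v j‖ = 1) (hdist : Function.Injective v)
    (a : Finset ℝ) (ha : a.card ≤ s)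
    (hangles : ∀ j k, j ≠ k → ((inner ℂ (v j) (v k) : ℂ)).re ∈ a) :
    n ≤ Nat.choose (s + 2 * d - 1) (2 * d - 1) +
        Nat.choose (s + 2 * d - 2) (2 * d - 1) := by
  rcases Nat.eq_zero_or_pos s with rfl | hs
  -- `card_le_of_inner_mem` counts the constants twice when `s = 0`, since then `s - 1 = s`.
  · have hn : n ≤ 1 := by
      by_contra! hn
      simpa [card_eq_zero.1 (Nat.le_zero.1 ha)] using
        hangles ⟨0, by omega⟩ ⟨1, hn⟩ (by simp [Fin.ext_iff])
    calc n ≤ 1 := hn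
      _ = (0 + 2 * d - 1).choose (2 * d - 1) := by simp
      _ ≤ _ := Nat.le_add_right _ _
  · have hdim : finrank ℝ (EuclideanSpace ℂ (Fin d)) = 2 * d := by
      rw [finrank_real_of_complex, finrank_euclideanSpace_fin]
    have hbound := card_le_of_inner_mem v hv hdist a ha fun j k hjk =>
      (EuclideanSpace.real_inner_eq_re_inner (v j) (v k)).symm ▸ hangles j k hjk
    rw [Fintype.card_fin, hdim] at hbound
    rwa [Nat.choose_symm_of_eq_add (by omega : 2 * d + s - 1 = s + (2 * d - 1)),
      Nat.choose_symm_of_eq_add (by omega : 2 * d + (s - 1) - 1 = s - 1 + (2 * d - 1)),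
      show 2 * d + s - 1 = s + 2 * d - 1 by omega,
      show 2 * d + (s - 1) - 1 = s + 2 * d - 2 by omega] at hbound
end

section
/- Let v_1,…,v_n be distinct unit vectors in ℂ^d spanning distinct lines, such that the values |⟨v_j,v_k⟩|² for j ≠ k lie in a set A ⊆ [0,1) of size s. Then n ≤ C(s+d−1, d−1) · C(s−ε+d−1, d−1), where ε = 1 if 0 ∈ A and ε = 0 otherwise. -/
/-!
For each `j`, the polynomial `z ↦ ⟨v_j, z⟩^ε ∏_{a ∈ A ∖ {0}} (|⟨v_j, z⟩|² - a‖z‖²)` in `z` and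
`z̄` (a homogenized form of the paper's annihilator `F`) is bihomogeneous of bidegree
`(s, s - ε)`. It vanishes at `v_k` for every `k ≠ j`, and not at `v_j` because every `a < 1`.
Hence these `n` polynomials are linearly independent in the space of bihomogeneous polynomials
of bidegree `(s, s - ε)` in `d` variables, whose dimension is `C(s+d-1, s) · C(s-ε+d-1, s-ε)`.
-/

open MvPolynomial Finsupp ComplexConjugate

section Bihomogeneous

variable (ι : Type*)

/-- Polynomials in `z` and `z̄` for `z : ι → ℂ` are modelled as `MvPolynomial (ι ⊕ ι)`, with
`X (.inl i)` standing for `zᵢ` and `X (.inr i)` for `z̄ᵢ`; this weight records the bidegree. -/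
def bidegreeWeight : ι ⊕ ι → ℕ × ℕ := Sum.elim (fun _ => (1, 0)) (fun _ => (0, 1))

variable {ι} [Fintype ι]

lemma weight_bidegreeWeight (m : ι ⊕ ι →₀ ℕ) :
    weight (bidegreeWeight ι) m = (∑ i, m (.inl i), ∑ i, m (.inr i)) := by
  rw [weight_apply, Finsupp.sum_fintype _ _ (by simp), Fintype.sum_sum_type]
  ext <;> simp [bidegreeWeight, Prod.fst_sum, Prod.snd_sum]

variable (ι)

noncomputable def bidegreeExponentsEquiv [DecidableEq ι] (a b : ℕ) :
    {m : ι ⊕ ι →₀ ℕ | weight (bidegreeWeight ι) m = (a, b)} ≃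
      ↥((Finset.univ : Finset ι).finsuppAntidiag a) ×
        ↥((Finset.univ : Finset ι).finsuppAntidiag b) :=
  (sumFinsuppEquivProdFinsupp.subtypeEquiv fun m => by
    simp only [Set.mem_ofPred_eq, weight_bidegreeWeight, Prod.mk.injEq,
      Finset.mem_finsuppAntidiag, Finset.subset_univ, and_true]
    rfl).trans Equiv.subtypeProdEquivProd

variable (K : Type*) [Field K]

instance (a b : ℕ) :
    Module.Finite K (weightedHomogeneousSubmodule K (bidegreeWeight ι) (a, b)) := by
  classical
  rw [weightedHomogeneousSubmodule_eq_finsupp_supported]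
  have := Finite.of_equiv _ (bidegreeExponentsEquiv ι a b).symm
  exact Module.Finite.of_basis (basisRestrictSupport K _)

theorem finrank_weightedHomogeneousSubmodule_bidegreeWeight (a b : ℕ) :
    Module.finrank K (weightedHomogeneousSubmodule K (bidegreeWeight ι) (a, b)) =
      (Fintype.card ι + a - 1).choose a * (Fintype.card ι + b - 1).choose b := by
  classical
  rw [weightedHomogeneousSubmodule_eq_finsupp_supported]
  refine (Module.finrank_eq_nat_card_basis (basisRestrictSupport K _)).trans ?_
  rw [Nat.card_congr (bidegreeExponentsEquiv ι a b), Nat.card_prod, Nat.card_eq_finsetCard,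
    Nat.card_eq_finsetCard, Finset.card_finsuppAntidiag_nat_eq_choose,
    Finset.card_finsuppAntidiag_nat_eq_choose, Finset.card_univ]

end Bihomogeneous

theorem card_le_finrank_of_eval_diagonal {K σ ι : Type*} [Field K] [Fintype ι]
    {S : Submodule K (MvPolynomial σ K)} [Module.Finite K S] (x : ι → σ → K)
    (P : ι → MvPolynomial σ K) (hPS : ∀ j, P j ∈ S)
    (hdiag : ∀ j, eval (x j) (P j) ≠ 0) (hoff : ∀ j k, j ≠ k → eval (x k) (P j) = 0) :
    Fintype.card ι ≤ Module.finrank K S := by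
  let evalAt : S →ₗ[K] ι → K := LinearMap.pi fun k => (aeval (x k)).toLinearMap ∘ₗ S.subtype
  have hind : LinearIndependent K (evalAt ∘ fun j => ⟨P j, hPS j⟩) := by
    rw [Fintype.linearIndependent_iff]
    intro c hc j
    have := congrFun hc j
    simp only [Finset.sum_apply, Pi.smul_apply, smul_eq_mul, Pi.zero_apply] at this
    rw [Finset.sum_eq_single j (fun k _ hkj => by simp [evalAt, hoff k j hkj]) (by simp)] at this
    exact (mul_eq_zero.1 this).resolve_right (by simpa [evalAt] using hdiag j)
  exact hind.of_comp.fintype_card_le_finrank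

section Annihilator

variable {ι : Type*} [Fintype ι]

def withConj (z : EuclideanSpace ℂ ι) : ι ⊕ ι → ℂ := Sum.elim z (fun i => conj (z i))

noncomputable def innerForm (w : EuclideanSpace ℂ ι) : MvPolynomial (ι ⊕ ι) ℂ :=
  ∑ i, C (conj (w i)) * X (.inl i)

noncomputable def conjInnerForm (w : EuclideanSpace ℂ ι) : MvPolynomial (ι ⊕ ι) ℂ :=
  ∑ i, C (w i) * X (.inr i)

variable (ι) in
noncomputable def normSqForm : MvPolynomial (ι ⊕ ι) ℂ :=
  ∑ i, X (.inl i) * X (.inr i)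

noncomputable def annihilator (w : EuclideanSpace ℂ ι) (e : ℕ) (B : Finset ℝ) :
    MvPolynomial (ι ⊕ ι) ℂ :=
  innerForm w ^ e * ∏ a ∈ B, (innerForm w * conjInnerForm w - C (a : ℂ) * normSqForm ι)

lemma isWeightedHomogeneous_innerForm (w : EuclideanSpace ℂ ι) :
    (innerForm w).IsWeightedHomogeneous (bidegreeWeight ι) (1, 0) :=
  .sum _ _ _ fun i _ => (isWeightedHomogeneous_X ℂ (bidegreeWeight ι) (.inl i)).C_mul _

lemma isWeightedHomogeneous_conjInnerForm (w : EuclideanSpace ℂ ι) :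
    (conjInnerForm w).IsWeightedHomogeneous (bidegreeWeight ι) (0, 1) :=
  .sum _ _ _ fun i _ => (isWeightedHomogeneous_X ℂ (bidegreeWeight ι) (.inr i)).C_mul _

lemma isWeightedHomogeneous_normSqForm :
    (normSqForm ι).IsWeightedHomogeneous (bidegreeWeight ι) (1, 1) :=
  .sum _ _ _ fun i _ =>
    (isWeightedHomogeneous_X ℂ (bidegreeWeight ι) (.inl i)).mul
      (isWeightedHomogeneous_X ℂ (bidegreeWeight ι) (.inr i))

lemma annihilator_mem_weightedHomogeneousSubmodule (w : EuclideanSpace ℂ ι) (e : ℕ)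
    (B : Finset ℝ) :
    annihilator w e B ∈ weightedHomogeneousSubmodule ℂ (bidegreeWeight ι) (e + B.card, B.card) := by
  have hfactor (a : ℝ) : (innerForm w * conjInnerForm w - C (a : ℂ) * normSqForm ι)
      |>.IsWeightedHomogeneous (bidegreeWeight ι) (1, 1) :=
    ((isWeightedHomogeneous_innerForm w).mul (isWeightedHomogeneous_conjInnerForm w)).sub
      (isWeightedHomogeneous_normSqForm.C_mul _)
  have := ((isWeightedHomogeneous_innerForm w).pow e).mul
    (IsWeightedHomogeneous.prod B _ _ fun a _ => hfactor a)
  rw [annihilator]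
  simpa using this

lemma eval_innerForm (w z : EuclideanSpace ℂ ι) :
    eval (withConj z) (innerForm w) = inner ℂ w z := by
  simp [innerForm, withConj, PiLp.inner_apply, mul_comm]

lemma eval_conjInnerForm (w z : EuclideanSpace ℂ ι) :
    eval (withConj z) (conjInnerForm w) = conj (inner ℂ w z) := by
  simp [conjInnerForm, withConj, PiLp.inner_apply, mul_comm]

lemma eval_normSqForm (z : EuclideanSpace ℂ ι) :
    eval (withConj z) (normSqForm ι) = (‖z‖ : ℂ) ^ 2 := by
  have := inner_self_eq_norm_sq_to_K (𝕜 := ℂ) z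
  simp only [PiLp.inner_apply, RCLike.inner_apply] at this
  simp only [normSqForm, withConj, map_sum, map_mul, eval_X, Sum.elim_inl, Sum.elim_inr]
  exact_mod_cast this

lemma eval_annihilator (w z : EuclideanSpace ℂ ι) (e : ℕ) (B : Finset ℝ) :
    eval (withConj z) (annihilator w e B) =
      inner ℂ w z ^ e * ∏ a ∈ B, ((‖inner ℂ w z‖ ^ 2 - a * ‖z‖ ^ 2 : ℝ) : ℂ) := by
  simp only [annihilator, map_mul, map_pow, map_prod, map_sub, eval_C, eval_innerForm,
    eval_conjInnerForm, eval_normSqForm, Complex.mul_conj']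
  push_cast
  rfl

lemma eval_annihilator_self_ne_zero {w : EuclideanSpace ℂ ι} (hw : ‖w‖ = 1) (e : ℕ)
    {B : Finset ℝ} (hB : ∀ a ∈ B, a < 1) : eval (withConj w) (annihilator w e B) ≠ 0 := by
  have hww : inner ℂ w w = 1 := by simp [inner_self_eq_norm_sq_to_K, hw]
  rw [eval_annihilator, hww, hw]
  simp only [one_pow, norm_one, mul_one, one_mul]
  exact Finset.prod_ne_zero_iff.2 fun a ha => by
    exact_mod_cast sub_ne_zero.2 (hB a ha).ne'

lemma eval_annihilator_eq_zero_of_mem {w z : EuclideanSpace ℂ ι} (hz : ‖z‖ = 1) (e : ℕ)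
    {B : Finset ℝ} (h : ‖inner ℂ w z‖ ^ 2 ∈ B) : eval (withConj z) (annihilator w e B) = 0 := by
  rw [eval_annihilator, Finset.prod_eq_zero h (by simp [hz]), mul_zero]

lemma eval_annihilator_eq_zero_of_inner_eq_zero {w z : EuclideanSpace ℂ ι}
    (h : inner ℂ w z = 0) {e : ℕ} (he : e ≠ 0) (B : Finset ℝ) :
    eval (withConj z) (annihilator w e B) = 0 := by
  rw [eval_annihilator, h, zero_pow he, zero_mul]

end Annihilator

theorem s_angular_lines_bound_general (d : ℕ) (hd : 1 ≤ d) (s : ℕ)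
    (A : Finset ℝ) (hAcard : A.card = s) (hA : ∀ x ∈ A, 0 ≤ x ∧ x < 1)
    (n : ℕ) (v : Fin n → EuclideanSpace ℂ (Fin d))
    (hv : ∀ j, ‖v j‖ = 1)
    (hangles : ∀ j k, j ≠ k → ‖(inner ℂ (v j) (v k) : ℂ)‖ ^ 2 ∈ A) :
    n ≤ Nat.choose (s + d - 1) (d - 1) *
        Nat.choose (s - (if (0 : ℝ) ∈ A then 1 else 0) + d - 1) (d - 1) := by
  classical
  set ε : ℕ := if (0 : ℝ) ∈ A then 1 else 0 with hε
  set B := A.erase 0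
  have hεB : ε + B.card = s := by
    by_cases h0 : (0 : ℝ) ∈ A
    · rw [hε, if_pos h0, add_comm, Finset.card_erase_add_one h0, hAcard]
    · simp [hε, h0, B, hAcard]
  have hoff (j k : Fin n) (hjk : j ≠ k) : eval (withConj (v k)) (annihilator (v j) ε B) = 0 := by
    by_cases h0 : ‖inner ℂ (v j) (v k)‖ ^ 2 = 0
    · have h0A : (0 : ℝ) ∈ A := h0 ▸ hangles j k hjk
      refine eval_annihilator_eq_zero_of_inner_eq_zero ?_ (by simp [hε, h0A]) B
      simpa using h0
    · exact eval_annihilator_eq_zero_of_mem (hv k) ε (Finset.mem_erase.2 ⟨h0, hangles j k hjk⟩)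
  have hdiag (j : Fin n) : eval (withConj (v j)) (annihilator (v j) ε B) ≠ 0 :=
    eval_annihilator_self_ne_zero (hv j) ε fun a ha => (hA a (Finset.mem_of_mem_erase ha)).2
  have hn := card_le_finrank_of_eval_diagonal (fun k => withConj (v k))
    (fun j => annihilator (v j) ε B) (fun j => annihilator_mem_weightedHomogeneousSubmodule _ ε B)
    hdiag hoff
  have hchoose (m : ℕ) : (d + m - 1).choose m = (m + d - 1).choose (d - 1) := by
    obtain ⟨d, rfl⟩ := Nat.exists_eq_add_of_le' hd
    rw [show d + 1 + m - 1 = m + d by omega, show m + (d + 1) - 1 = m + d by omega,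
      Nat.add_sub_cancel, Nat.choose_symm_add]
  rwa [finrank_weightedHomogeneousSubmodule_bidegreeWeight, Fintype.card_fin, Fintype.card_fin,
    hchoose, hchoose, hεB, show B.card = s - ε by omega] at hn

/-- Bound for `s`-angular sets of lines in `ℂ^d`: if unit vectors `v_1,…,v_n` span
pairwise distinct lines and the values `|⟨v_j,v_k⟩|²`, `j ≠ k`, lie in a set
`A ⊆ [0,1)` of size `s`, then `n ≤ C(s+d−1,d−1)·C(s−ε+d−1,d−1)`, where `ε = 1` if
`0 ∈ A` and `ε = 0` otherwise. -/
theorem s_angular_lines_bound (d : ℕ) (hd : 1 ≤ d) (s : ℕ)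
    (A : Finset ℝ) (hAcard : A.card = s) (hA : ∀ x ∈ A, 0 ≤ x ∧ x < 1)
    (n : ℕ) (v : Fin n → EuclideanSpace ℂ (Fin d))
    (hv : ∀ j, ‖v j‖ = 1)
    (hlines : ∀ j k, j ≠ k → ∀ c : ℂ, v j ≠ c • v k)
    (hangles : ∀ j k, j ≠ k → ‖(inner ℂ (v j) (v k) : ℂ)‖ ^ 2 ∈ A) :
    n ≤ Nat.choose (s + d - 1) (d - 1) *
        Nat.choose (s - (if (0 : ℝ) ∈ A then 1 else 0) + d - 1) (d - 1) :=
  s_angular_lines_bound_general d hd s A hAcard hA n v hv hangles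
end
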